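/- Let λ, ν ∈ Λ_{n,d} and z ∈ W_d, and let y be the unique element of D_{λν} with W_λ z W_ν = W_λ y W_ν. Then in H: x_λ T_z x_ν = u^{2(ℓ_c(z) - ℓ_c(y))} v^{2(ℓ_a(z) - ℓ_a(y))} x_λ T_y x_ν. -/

import Mathlib

open scoped BigOperators

namespace TypeB

/-- Simple reflections of the Weyl group of type B, as permutations of ℤ:
`s 0 = (-1,1)` and `s i = (i,i+1)(-i,-i-1)` for `i ≥ 1`. -/
def s (i : ℕ) : Equiv.Perm ℤ :=
  if i = 0 then Equiv.swap (-1 : ℤ) 1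
  else Equiv.swap (i : ℤ) ((i : ℤ) + 1) * Equiv.swap (-(i : ℤ)) (-(i : ℤ) - 1)

/-- The Weyl group of type B_d: permutations of ℤ supported on `[-d,d]`
satisfying `g (-i) = - g i`. -/
def W (d : ℕ) : Set (Equiv.Perm ℤ) :=
  {g | (∀ i : ℤ, g (-i) = -(g i)) ∧ ∀ i : ℤ, (d : ℤ) < |i| → g i = i}

/-- The Coxeter length of `g` with respect to `{s 0, …, s (d-1)}`: the minimal
length of an expression of `g` as a product of simple reflections. -/
noncomputable def len (d : ℕ) (g : Equiv.Perm ℤ) : ℕ :=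
  sInf {r | ∃ l : List (Equiv.Perm ℤ),
    (∀ x ∈ l, ∃ i, i < d ∧ x = s i) ∧ l.length = r ∧ l.prod = g}

/-- The truncated length `ℓ_c g = #{i ∈ [1,d] : g i < 0}`. -/
noncomputable def lenc (d : ℕ) (g : Equiv.Perm ℤ) : ℕ :=
  ((Finset.Icc (1 : ℤ) (d : ℤ)).filter (fun i => g i < 0)).card

/-- Partial sum `λ_0 + ⋯ + λ_k`. -/
def psum (lam : ℕ → ℕ) (k : ℕ) : ℕ := ∑ j ∈ Finset.range (k + 1), lam j

/-- Compositions `(λ_0, …, λ_n)` of `d`, recorded as functions `ℕ → ℕ`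
vanishing beyond `n`.  Such a composition encodes the symmetric tuple
`(λ_n, …, λ_1, 2λ_0+1, λ_1, …, λ_n) ∈ Λ_{n,d}`. -/
def LambdaSet (n d : ℕ) : Set (ℕ → ℕ) :=
  {lam | psum lam n = d ∧ ∀ i, n < i → lam i = 0}

/-- The integer intervals `R_i^λ ⊆ [-d,d]`. -/
noncomputable def R (lam : ℕ → ℕ) (i : ℤ) : Finset ℤ :=
  if i = 0 then Finset.Icc (-(lam 0 : ℤ)) (lam 0 : ℤ)
  else if 0 < i then
    Finset.Icc ((psum lam (i.toNat - 1) : ℤ) + 1) ((psum lam i.toNat : ℤ))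
  else
    (Finset.Icc ((psum lam ((-i).toNat - 1) : ℤ) + 1) ((psum lam (-i).toNat : ℤ))).image
      (fun x => -x)

/-- The parabolic subgroup `W_λ`, generated by
`S ∖ {s_{λ_0}, s_{λ_0+λ_1}, …, s_{λ_0+⋯+λ_{n-1}}}`. -/
def Wpar (d n : ℕ) (lam : ℕ → ℕ) : Subgroup (Equiv.Perm ℤ) :=
  Subgroup.closure {x | ∃ i, i < d ∧ (∀ k, k < n → i ≠ psum lam k) ∧ x = s i}

/-- Minimal length right coset representatives `D_λ`. -/
noncomputable def Dset (d n : ℕ) (lam : ℕ → ℕ) : Set (Equiv.Perm ℤ) :=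
  {w | w ∈ W d ∧ ∀ x ∈ Wpar d n lam, len d (x * w) = len d x + len d w}

/-- Minimal length double coset representatives `D_{λμ} = D_λ ∩ D_μ⁻¹`. -/
noncomputable def DDset (d n : ℕ) (lam mu : ℕ → ℕ) : Set (Equiv.Perm ℤ) :=
  {w | w ∈ Dset d n lam ∧ w⁻¹ ∈ Dset d n mu}

/-- The entries of the matrix `κ(λ, g, μ)`: `a_{ij} = |R_i^λ ∩ g (R_j^μ)|`. -/
noncomputable def kappaMat (lam : ℕ → ℕ) (g : Equiv.Perm ℤ) (mu : ℕ → ℕ) : ℤ → ℤ → ℕ :=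
  fun i j => ((R lam i) ∩ ((R mu j).image (fun x => g x))).card

/-- The ground ring `𝒜 = ℤ[u^{±1}, v^{±1}]`, realized as the group algebra of `ℤ × ℤ`
over `ℤ`; the monomial `u^a v^b` is `UV a b`. -/
abbrev LA : Type := AddMonoidAlgebra ℤ (ℤ × ℤ)

/-- The Laurent monomial `u^a v^b` in `𝒜`. -/
noncomputable def UV (a b : ℤ) : LA := AddMonoidAlgebra.single (a, b) 1

/-- `u` -/
noncomputable def Uq : LA := UV 1 0

/-- `v` -/
noncomputable def Vq : LA := UV 0 1

theorem _root_.Equiv.Perm.apply_inv_self {α : Type*} (f : Equiv.Perm α) (x : α) : f (f⁻¹ x) = x :=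
  Equiv.apply_symm_apply f x

theorem _root_.Equiv.Perm.inv_apply_self {α : Type*} (f : Equiv.Perm α) (x : α) : f⁻¹ (f x) = x :=
  Equiv.symm_apply_apply f x

/-! ### Basic facts about the simple reflections -/

/-- Explicit formula for `s i`. -/
def sFun (i : ℕ) (r : ℤ) : ℤ :=
  if i = 0 then (if r = -1 then 1 else if r = 1 then -1 else r)
  else (if r = (i:ℤ) then (i:ℤ)+1 else if r = (i:ℤ)+1 then (i:ℤ)
        else if r = -(i:ℤ) then -(i:ℤ)-1 else if r = -(i:ℤ)-1 then -(i:ℤ) else r)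

lemma s_apply (i : ℕ) (r : ℤ) : s i r = sFun i r := by
  unfold s sFun
  by_cases h : i = 0
  · subst h; simp only [if_true, reduceIte]
    rcases eq_or_ne r (-1) with h1 | h1
    · subst h1; simp [Equiv.swap_apply_left]
    · rcases eq_or_ne r 1 with h2 | h2
      · subst h2; simp [Equiv.swap_apply_right]
      · rw [if_neg h1, if_neg h2, Equiv.swap_apply_of_ne_of_ne h1 h2]
  · have hi : (1:ℤ) ≤ (i:ℤ) := by exact_mod_cast Nat.one_le_iff_ne_zero.mpr h
    rw [if_neg h, if_neg h]
    simp only [Equiv.Perm.mul_apply]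
    rcases eq_or_ne r (-(i:ℤ)) with h3 | h3
    · subst h3
      rw [Equiv.swap_apply_left, Equiv.swap_apply_of_ne_of_ne (by omega) (by omega)]
      rw [if_neg (by omega), if_neg (by omega), if_pos rfl]
    rcases eq_or_ne r (-(i:ℤ)-1) with h4 | h4
    · subst h4
      rw [Equiv.swap_apply_right, Equiv.swap_apply_of_ne_of_ne (by omega) (by omega)]
      rw [if_neg (by omega), if_neg (by omega), if_neg (by omega), if_pos rfl]
    rw [Equiv.swap_apply_of_ne_of_ne h3 h4]
    rcases eq_or_ne r (i:ℤ) with h1 | h1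
    · subst h1; rw [Equiv.swap_apply_left, if_pos rfl]
    rcases eq_or_ne r ((i:ℤ)+1) with h2 | h2
    · subst h2; rw [Equiv.swap_apply_right, if_neg h1, if_pos rfl]
    rw [Equiv.swap_apply_of_ne_of_ne h1 h2, if_neg h1, if_neg h2, if_neg h3, if_neg h4]

lemma s_neg (i : ℕ) (r : ℤ) : s i (-r) = -(s i r) := by
  rw [s_apply, s_apply]; unfold sFun
  by_cases h : i = 0
  · simp only [h, if_true, reduceIte]; split_ifs <;> omega
  · have hi : (1:ℤ) ≤ (i:ℤ) := by exact_mod_cast Nat.one_le_iff_ne_zero.mpr h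
    simp only [if_neg h]; split_ifs <;> omega

lemma s_fix (i : ℕ) (r : ℤ) (h : (i:ℤ)+1 < |r|) : s i r = r := by
  rw [s_apply]; unfold sFun
  rcases abs_cases r with ⟨h1, h2⟩ | ⟨h1, h2⟩ <;>
  · by_cases h0 : i = 0
    · subst h0; simp only [Nat.cast_zero] at h ⊢
      rw [if_pos trivial, if_neg (by omega), if_neg (by omega)]
    · have hi : (1:ℤ) ≤ (i:ℤ) := by exact_mod_cast Nat.one_le_iff_ne_zero.mpr h0
      rw [if_neg h0, if_neg (by omega), if_neg (by omega), if_neg (by omega),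
        if_neg (by omega)]

lemma s_mem_W {d : ℕ} {i : ℕ} (h : i < d) : s i ∈ W d := by
  refine ⟨s_neg i, fun r hr => s_fix i r ?_⟩
  have : (i:ℤ) < (d:ℤ) := by exact_mod_cast h
  omega

lemma s_mul_self (i : ℕ) : s i * s i = 1 := by
  ext r
  simp only [Equiv.Perm.mul_apply, Equiv.Perm.one_apply]
  rw [s_apply, s_apply]; unfold sFun
  by_cases h : i = 0
  · simp only [h, if_true, reduceIte]
    rcases eq_or_ne r (-1) with h1 | h1
    · subst h1; norm_num
    rcases eq_or_ne r 1 with h2 | h2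
    · subst h2; norm_num
    rw [if_neg h1, if_neg h2, if_neg h1, if_neg h2]
  · have hi : (1:ℤ) ≤ (i:ℤ) := by exact_mod_cast Nat.one_le_iff_ne_zero.mpr h
    simp only [if_neg h]; split_ifs <;> omega

lemma s_apply_self (i : ℕ) (r : ℤ) : s i (s i r) = r := by
  have h := s_mul_self i
  calc s i (s i r) = (s i * s i) r := rfl
  _ = r := by rw [h]; rfl

/-! ### The group `W d` -/

lemma W_one (d : ℕ) : (1 : Equiv.Perm ℤ) ∈ W d := ⟨fun _ => rfl, fun _ _ => rfl⟩

lemma W_mul {d : ℕ} {g h : Equiv.Perm ℤ} (hg : g ∈ W d) (hh : h ∈ W d) :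
    g * h ∈ W d := by
  refine ⟨fun i => ?_, fun i hi => ?_⟩
  · simp only [Equiv.Perm.mul_apply, hh.1, hg.1]
  · simp only [Equiv.Perm.mul_apply, hh.2 i hi, hg.2 i hi]

lemma W_inv {d : ℕ} {g : Equiv.Perm ℤ} (hg : g ∈ W d) : g⁻¹ ∈ W d := by
  constructor
  · intro i
    apply g.injective
    rw [Equiv.Perm.apply_inv_self, hg.1, Equiv.Perm.apply_inv_self]
  · intro i hi
    have h1 : g i = i := hg.2 i hi
    conv_lhs => rw [← h1]
    exact g.inv_apply_self i

lemma W_zero {d : ℕ} {g : Equiv.Perm ℤ} (hg : g ∈ W d) : g 0 = 0 := by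
  have := hg.1 0
  simp only [neg_zero] at this
  omega

lemma W_bound {d : ℕ} {g : Equiv.Perm ℤ} (hg : g ∈ W d) {r : ℤ} (hr : |r| ≤ (d:ℤ)) :
    |g r| ≤ (d:ℤ) := by
  by_contra hc
  push_neg at hc
  have h1 : g (g r) = g r := hg.2 (g r) hc
  have h2 : g r = r := g.injective h1
  rw [h2] at hc
  omega

/-- `W d` as a subgroup. -/
def Wgrp (d : ℕ) : Subgroup (Equiv.Perm ℤ) where
  carrier := W d
  one_mem' := W_one d
  mul_mem' := fun ha hb => W_mul ha hb
  inv_mem' := fun ha => W_inv ha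

lemma Wpar_le_Wgrp (d n : ℕ) (lam : ℕ → ℕ) : Wpar d n lam ≤ Wgrp d := by
  apply (Subgroup.closure_le (Wgrp d)).mpr
  rintro x ⟨i, hi, -, rfl⟩
  exact s_mem_W hi

lemma Wpar_mem_W {d n : ℕ} {lam : ℕ → ℕ} {x : Equiv.Perm ℤ} (h : x ∈ Wpar d n lam) :
    x ∈ W d := Wpar_le_Wgrp d n lam h
/-! ### Inversions and the combinatorial length -/

/-- Canonical representative of a root class. -/
def canP (p : ℤ × ℤ) : ℤ × ℤ := if 0 ≤ p.1 + p.2 then p else (-p.2, -p.1)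

/-- The positive roots, encoded as canonical pairs `(x,y)` with
`-y ≤ x < y`, `x ≠ 0`, `1 ≤ y ≤ d`. -/
noncomputable def PRF (d : ℕ) : Finset (ℤ × ℤ) :=
  (Finset.Icc (-(d:ℤ)) (d:ℤ) ×ˢ Finset.Icc (1:ℤ) (d:ℤ)).filter
    (fun c => c.1 ≠ 0 ∧ -c.2 ≤ c.1 ∧ c.1 < c.2)

lemma mem_PRF {d : ℕ} {c : ℤ × ℤ} :
    c ∈ PRF d ↔ c.1 ≠ 0 ∧ -c.2 ≤ c.1 ∧ c.1 < c.2 ∧ c.2 ≤ (d:ℤ) := by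
  unfold PRF
  simp only [Finset.mem_filter, Finset.mem_product, Finset.mem_Icc]
  constructor
  · rintro ⟨⟨h1, h2⟩, h3, h4, h5⟩; exact ⟨h3, h4, h5, h2.2⟩
  · rintro ⟨h1, h2, h3, h4⟩
    refine ⟨⟨⟨by omega, by omega⟩, by omega, h4⟩, h1, h2, h3⟩

/-- The inversion set of `g`. -/
noncomputable def NF (d : ℕ) (g : Equiv.Perm ℤ) : Finset (ℤ × ℤ) :=
  (PRF d).filter (fun c => g c.2 < g c.1)

/-- The combinatorial length. -/
noncomputable def L (d : ℕ) (g : Equiv.Perm ℤ) : ℕ := (NF d g).card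

/-- The simple root associated to `s i`. -/
def alpha (i : ℕ) : ℤ × ℤ := if i = 0 then (-1, 1) else ((i:ℤ), (i:ℤ)+1)

lemma alpha_mem {d i : ℕ} (h : i < d) : alpha i ∈ PRF d := by
  unfold alpha
  by_cases h0 : i = 0
  · subst h0; rw [mem_PRF]; simp only [if_true, reduceIte]
    refine ⟨by norm_num, by norm_num, by norm_num, by exact_mod_cast h⟩
  · rw [if_neg h0, mem_PRF]
    have hi : (1:ℤ) ≤ (i:ℤ) := by exact_mod_cast Nat.one_le_iff_ne_zero.mpr h0
    have hid : (i:ℤ) + 1 ≤ (d:ℤ) := by exact_mod_cast h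
    exact ⟨by omega, by omega, by omega, hid⟩

lemma s_zero_iff (i : ℕ) {r : ℤ} : s i r = 0 ↔ r = 0 := by
  constructor
  · intro h
    have : s i (0:ℤ) = 0 := by
      rw [s_apply]; unfold sFun
      by_cases h0 : i = 0
      · simp only [h0, if_true, reduceIte]; norm_num
      · have hi : (1:ℤ) ≤ (i:ℤ) := by exact_mod_cast Nat.one_le_iff_ne_zero.mpr h0
        rw [if_neg h0, if_neg (by omega), if_neg (by omega), if_neg (by omega),
          if_neg (by omega)]
    exact (s i).injective (h.trans this.symm)
  · rintro rfl
    rw [s_apply]; unfold sFun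
    by_cases h0 : i = 0
    · simp only [h0, if_true, reduceIte]; norm_num
    · have hi : (1:ℤ) ≤ (i:ℤ) := by exact_mod_cast Nat.one_le_iff_ne_zero.mpr h0
      rw [if_neg h0, if_neg (by omega), if_neg (by omega), if_neg (by omega),
        if_neg (by omega)]

/-- `s i` preserves positivity of all positive-root classes except `alpha i`. -/
lemma s_pos {d i : ℕ} (hid : i < d) {x y : ℤ} (hx : x ≠ 0) (hxy : -y ≤ x)
    (hlt : x < y) (hyd : y ≤ (d:ℤ)) (hne : ¬(x = (alpha i).1 ∧ y = (alpha i).2)) :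
    s i x < s i y := by
  rw [s_apply, s_apply]; unfold sFun alpha at *
  by_cases h0 : i = 0
  · subst h0
    simp only [if_true, reduceIte] at hne ⊢
    split_ifs <;> omega
  · have hi : (1:ℤ) ≤ (i:ℤ) := by exact_mod_cast Nat.one_le_iff_ne_zero.mpr h0
    rw [if_neg h0] at hne
    simp only [if_neg h0]
    split_ifs <;> simp_all <;> omega

lemma s_alpha_inv {i : ℕ} : s i (alpha i).2 < s i (alpha i).1 := by
  unfold alpha
  by_cases h0 : i = 0
  · subst h0
    simp only [if_true, reduceIte]
    rw [s_apply, s_apply]; unfold sFun; norm_num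
  · have hi : (1:ℤ) ≤ (i:ℤ) := by exact_mod_cast Nat.one_le_iff_ne_zero.mpr h0
    rw [if_neg h0, s_apply, s_apply]; unfold sFun
    simp only [if_neg h0]
    split_ifs <;> omega
/-! ### Effect of right multiplication by `s i` on the length -/

/-- The induced map on positive-root classes. -/
def Phi (i : ℕ) (c : ℤ × ℤ) : ℤ × ℤ := canP (s i c.1, s i c.2)

lemma s_alpha_fst (i : ℕ) : s i (alpha i).1 = (alpha i).2 := by
  unfold alpha
  by_cases h0 : i = 0
  · subst h0; simp only [if_true, reduceIte]
    rw [s_apply]; unfold sFun; norm_num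
  · have hi : (1:ℤ) ≤ (i:ℤ) := by exact_mod_cast Nat.one_le_iff_ne_zero.mpr h0
    simp only [if_neg h0]
    rw [s_apply]; unfold sFun
    rw [if_neg h0, if_pos rfl]

lemma s_alpha_snd (i : ℕ) : s i (alpha i).2 = (alpha i).1 := by
  have h := s_alpha_fst i
  calc s i (alpha i).2 = s i (s i (alpha i).1) := by rw [h]
  _ = (alpha i).1 := s_apply_self i _

lemma alpha_lt (i : ℕ) : (alpha i).1 < (alpha i).2 := by
  unfold alpha
  by_cases h0 : i = 0
  · subst h0; norm_num
  · have hi : (1:ℤ) ≤ (i:ℤ) := by exact_mod_cast Nat.one_le_iff_ne_zero.mpr h0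
    simp only [if_neg h0]; omega

lemma W_bound' {d : ℕ} {g : Equiv.Perm ℤ} (hg : g ∈ W d) {r : ℤ}
    (h1 : -(d:ℤ) ≤ r) (h2 : r ≤ (d:ℤ)) : -(d:ℤ) ≤ g r ∧ g r ≤ (d:ℤ) :=
  abs_le.mp (W_bound hg (abs_le.mpr ⟨h1, h2⟩))

lemma Phi_mem {d i : ℕ} (hid : i < d) {c : ℤ × ℤ} (hc : c ∈ PRF d)
    (hne : c ≠ alpha i) : Phi i c ∈ PRF d ∧ Phi i c ≠ alpha i := by
  obtain ⟨hx, hxy, hlt, hyd⟩ := mem_PRF.mp hc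
  have hne' : ¬(c.1 = (alpha i).1 ∧ c.2 = (alpha i).2) := by
    intro ⟨h1, h2⟩; exact hne (Prod.ext h1 h2)
  have hpq : s i c.1 < s i c.2 := s_pos hid hx hxy hlt hyd hne'
  have hp0 : s i c.1 ≠ 0 := fun h => hx ((s_zero_iff i).mp h)
  have hq0 : s i c.2 ≠ 0 := fun h => (by omega : c.2 ≠ 0) ((s_zero_iff i).mp h)
  obtain ⟨hpb1, hpb2⟩ := W_bound' (s_mem_W hid) (r := c.1) (by omega) (by omega)
  obtain ⟨hqb1, hqb2⟩ := W_bound' (s_mem_W hid) (r := c.2) (by omega) (by omega)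
  have hmem : Phi i c ∈ PRF d := by
    unfold Phi canP
    split_ifs with hs
    · exact mem_PRF.mpr ⟨hp0, by omega, hpq, by omega⟩
    · exact mem_PRF.mpr ⟨by omega, by omega, by omega, by omega⟩
  refine ⟨hmem, fun hPa => ?_⟩
  have hfst : s i (Phi i c).1 = s i (alpha i).1 := by rw [hPa]
  have hsnd : s i (Phi i c).2 = s i (alpha i).2 := by rw [hPa]
  rw [s_alpha_fst] at hfst
  rw [s_alpha_snd] at hsnd
  unfold Phi canP at hfst hsnd
  split_ifs at hfst hsnd with hs
  · simp only [s_apply_self] at hfst hsnd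
    have := alpha_lt i
    omega
  · simp only [s_neg, s_apply_self, neg_neg] at hfst hsnd
    have h1 : (1:ℤ) ≤ c.2 := by omega
    obtain ⟨ha1, ha2, ha3, ha4⟩ := mem_PRF.mp (alpha_mem (d := d) hid)
    omega

lemma Phi_invol {d i : ℕ} (hid : i < d) {c : ℤ × ℤ} (hc : c ∈ PRF d)
    (hne : c ≠ alpha i) : Phi i (Phi i c) = c := by
  obtain ⟨hx, hxy, hlt, hyd⟩ := mem_PRF.mp hc
  have hne' : ¬(c.1 = (alpha i).1 ∧ c.2 = (alpha i).2) := by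
    intro ⟨h1, h2⟩; exact hne (Prod.ext h1 h2)
  have hpq : s i c.1 < s i c.2 := s_pos hid hx hxy hlt hyd hne'
  unfold Phi canP
  by_cases hs : 0 ≤ s i c.1 + s i c.2
  · rw [if_pos hs]
    simp only [s_apply_self]
    rw [if_pos (by omega)]
  · rw [if_neg hs]
    simp only [s_neg, s_apply_self]
    have hxy1 : 0 < c.1 + c.2 := by
      rcases lt_or_eq_of_le hxy with h | h
      · omega
      · exfalso
        have h1 : c.1 = -c.2 := by omega
        have h2 : s i c.1 = -(s i c.2) := by rw [h1, s_neg]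
        omega
    rw [if_neg (by omega)]
    simp only [neg_neg]

lemma Phi_pred {d i : ℕ} {g : Equiv.Perm ℤ} (hg : g ∈ W d) {c : ℤ × ℤ} :
    (g (Phi i c).2 < g (Phi i c).1) ↔ (g (s i c.2) < g (s i c.1)) := by
  unfold Phi canP
  split_ifs with hs
  · rfl
  · simp only [hg.1]
    omega

lemma L_mul_s {d i : ℕ} (hid : i < d) {g : Equiv.Perm ℤ} (hg : g ∈ W d) :
    (g (alpha i).2 < g (alpha i).1 → L d (g * s i) + 1 = L d g) ∧
    (¬ g (alpha i).2 < g (alpha i).1 → L d (g * s i) = L d g + 1) := by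
  classical
  have hα : alpha i ∈ PRF d := alpha_mem hid
  have key : (((PRF d).erase (alpha i)).filter
        (fun c => (g * s i) c.2 < (g * s i) c.1)).card
      = (((PRF d).erase (alpha i)).filter (fun c => g c.2 < g c.1)).card := by
    apply Finset.card_bij' (fun c _ => Phi i c) (fun c _ => Phi i c)
    · intro c hc
      simp only [Finset.mem_filter, Finset.mem_erase] at hc ⊢
      obtain ⟨⟨hcne, hcm⟩, hcp⟩ := hc
      obtain ⟨hm, hn⟩ := Phi_mem hid hcm hcne
      refine ⟨⟨hn, hm⟩, ?_⟩
      rw [Phi_pred hg]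
      simpa only [Equiv.Perm.mul_apply] using hcp
    · intro c hc
      simp only [Finset.mem_filter, Finset.mem_erase] at hc ⊢
      obtain ⟨⟨hcne, hcm⟩, hcp⟩ := hc
      obtain ⟨hm, hn⟩ := Phi_mem hid hcm hcne
      refine ⟨⟨hn, hm⟩, ?_⟩
      simp only [Equiv.Perm.mul_apply]
      rw [← Phi_pred hg, Phi_invol hid hcm hcne]
      exact hcp
    · intro c hc
      simp only [Finset.mem_filter, Finset.mem_erase] at hc
      exact Phi_invol hid hc.1.2 hc.1.1
    · intro c hc
      simp only [Finset.mem_filter, Finset.mem_erase] at hc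
      exact Phi_invol hid hc.1.2 hc.1.1
  have hsplit : ∀ g' : Equiv.Perm ℤ, L d g' =
      (((PRF d).erase (alpha i)).filter (fun c => g' c.2 < g' c.1)).card
        + (if g' (alpha i).2 < g' (alpha i).1 then 1 else 0) := by
    intro g'
    unfold L NF
    rw [Finset.filter_erase]
    by_cases hp : g' (alpha i).2 < g' (alpha i).1
    · rw [if_pos hp,
        Finset.card_erase_of_mem (Finset.mem_filter.mpr ⟨hα, hp⟩)]
      have hcard : 1 ≤ ((PRF d).filter (fun c => g' c.2 < g' c.1)).card :=
        Finset.card_pos.mpr ⟨alpha i, Finset.mem_filter.mpr ⟨hα, hp⟩⟩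
      omega
    · rw [if_neg hp, add_zero,
        Finset.erase_eq_of_notMem
          (a := alpha i) (s := (PRF d).filter (fun c => g' c.2 < g' c.1))
          (fun hmem => hp (Finset.mem_filter.mp hmem).2)]
  have hα1 : ((g * s i) (alpha i).2 < (g * s i) (alpha i).1) ↔
      ¬ (g (alpha i).2 < g (alpha i).1) := by
    simp only [Equiv.Perm.mul_apply, s_alpha_fst, s_alpha_snd]
    have hinj : g (alpha i).1 ≠ g (alpha i).2 := by
      intro he
      have h1 := g.injective he
      have h2 := alpha_lt i
      omega
    omega
  have h1 := hsplit (g * s i)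
  have h2 := hsplit g
  constructor
  · intro h
    rw [h1, h2, key, if_pos h, if_neg (fun hgs => (hα1.mp hgs) h)]
  · intro h
    rw [h1, h2, key, if_neg h, if_pos (hα1.mpr h)]
/-! ### `L` of the inverse, and `len = L` -/

lemma L_inv {d : ℕ} {g : Equiv.Perm ℤ} (hg : g ∈ W d) : L d g⁻¹ = L d g := by
  classical
  have hgi := W_inv hg
  unfold L NF
  apply Finset.card_bij' (fun c _ => canP (g⁻¹ c.2, g⁻¹ c.1))
    (fun c _ => canP (g c.2, g c.1))
  · intro c hc
    simp only [Finset.mem_filter] at hc ⊢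
    obtain ⟨hcm, hcp⟩ := hc
    obtain ⟨hx, hxy, hlt, hyd⟩ := mem_PRF.mp hcm
    have hp0 : g⁻¹ c.2 ≠ 0 := fun h => by
      have : c.2 = g 0 := by rw [← h, Equiv.Perm.apply_inv_self]
      rw [W_zero hg] at this; omega
    have hq0 : g⁻¹ c.1 ≠ 0 := fun h => by
      have : c.1 = g 0 := by rw [← h, Equiv.Perm.apply_inv_self]
      rw [W_zero hg] at this; omega
    obtain ⟨hb1, hb2⟩ := W_bound' hgi (r := c.2) (by omega) (by omega)
    obtain ⟨hb3, hb4⟩ := W_bound' hgi (r := c.1) (by omega) (by omega)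
    constructor
    · unfold canP
      split_ifs with hs
      · exact mem_PRF.mpr ⟨hp0, by omega, hcp, by omega⟩
      · exact mem_PRF.mpr ⟨by omega, by omega, by omega, by omega⟩
    · unfold canP
      split_ifs with hs
      · simp only [Equiv.Perm.apply_inv_self]
        exact hlt
      · simp only [hg.1, Equiv.Perm.apply_inv_self]
        omega
  · intro c hc
    simp only [Finset.mem_filter] at hc ⊢
    obtain ⟨hcm, hcp⟩ := hc
    obtain ⟨hx, hxy, hlt, hyd⟩ := mem_PRF.mp hcm
    have hp0 : g c.2 ≠ 0 := fun h => by
      have := g.injective (h.trans (W_zero hg).symm); omega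
    have hq0 : g c.1 ≠ 0 := fun h => by
      have := g.injective (h.trans (W_zero hg).symm); omega
    obtain ⟨hb1, hb2⟩ := W_bound' hg (r := c.2) (by omega) (by omega)
    obtain ⟨hb3, hb4⟩ := W_bound' hg (r := c.1) (by omega) (by omega)
    constructor
    · unfold canP
      split_ifs with hs
      · exact mem_PRF.mpr ⟨hp0, by omega, hcp, by omega⟩
      · exact mem_PRF.mpr ⟨by omega, by omega, by omega, by omega⟩
    · unfold canP
      split_ifs with hs
      · simp only [Equiv.Perm.inv_apply_self]
        exact hlt
      · simp only [hgi.1, Equiv.Perm.inv_apply_self]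
        omega
  · intro c hc
    simp only [Finset.mem_filter] at hc
    obtain ⟨hcm, hcp⟩ := hc
    obtain ⟨hx, hxy, hlt, hyd⟩ := mem_PRF.mp hcm
    unfold canP
    by_cases hs : 0 ≤ g⁻¹ c.2 + g⁻¹ c.1
    · rw [if_pos hs]
      simp only [Equiv.Perm.apply_inv_self]
      rw [if_pos (by omega)]
    · rw [if_neg hs]
      simp only [hg.1, Equiv.Perm.apply_inv_self]
      have hne : c.1 + c.2 ≠ 0 := by
        intro h0
        have h1 : c.1 = -c.2 := by omega
        have : g⁻¹ c.1 = -(g⁻¹ c.2) := by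
          rw [h1]; exact hgi.1 c.2
        omega
      rw [if_neg (by omega)]
      simp only [neg_neg]
  · intro c hc
    simp only [Finset.mem_filter] at hc
    obtain ⟨hcm, hcp⟩ := hc
    obtain ⟨hx, hxy, hlt, hyd⟩ := mem_PRF.mp hcm
    unfold canP
    by_cases hs : 0 ≤ g c.2 + g c.1
    · rw [if_pos hs]
      simp only [Equiv.Perm.inv_apply_self]
      rw [if_pos (by omega)]
    · rw [if_neg hs]
      simp only [hgi.1, Equiv.Perm.inv_apply_self]
      have hne : c.1 + c.2 ≠ 0 := by
        intro h0
        have h1 : c.1 = -c.2 := by omega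
        have : g c.1 = -(g c.2) := by rw [h1]; exact hg.1 c.2
        omega
      rw [if_neg (by omega)]
      simp only [neg_neg]

/-- A permutation in `W d` with no descents is the identity. -/
lemma no_descent_eq_one {d : ℕ} {g : Equiv.Perm ℤ} (hg : g ∈ W d)
    (h : ∀ i : ℕ, i < d → ¬ g (alpha i).2 < g (alpha i).1) : g = 1 := by
  rcases Nat.eq_zero_or_pos d with hd0 | hd0
  · ext r
    subst hd0
    rcases lt_trichotomy r 0 with hr | hr | hr
    · exact hg.2 r (by rw [Nat.cast_zero]; exact abs_pos.mpr (by omega))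
    · rw [hr, W_zero hg]; rfl
    · exact hg.2 r (by rw [Nat.cast_zero]; exact abs_pos.mpr (by omega))
  · -- increasing on [1, d]
    have hmono : ∀ k : ℕ, (1:ℤ) ≤ k → (k:ℤ) + 1 ≤ d → g k < g (k+1) := by
      intro k hk1 hkd
      have hkdn : k < d := by omega
      have hh := h k (by omega)
      unfold alpha at hh
      have hk0 : k ≠ 0 := by omega
      rw [if_neg hk0] at hh
      have hh2 : ¬ g ((k:ℤ)+1) < g (k:ℤ) := hh
      have hne : g (k:ℤ) ≠ g ((k:ℤ)+1) := fun he => by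
        have := g.injective he; omega
      omega
    have h1pos : 0 < g 1 := by
      have := h 0 (by omega)
      unfold alpha at this
      simp only [if_true, reduceIte] at this
      have h1 : g (-1) = -(g 1) := hg.1 1
      have hne : g 1 ≠ 0 := fun he => by
        have : g 1 = g 0 := by rw [he, W_zero hg]
        have := g.injective this; omega
      omega
    -- chain: g is strictly increasing on [1,d]
    have hchain : ∀ m : ℕ, ∀ a : ℤ, 1 ≤ a → a + m ≤ d → g a < g (a + m) + 1 := by
      intro m
      induction m with
      | zero => intro a _ _; rw [Nat.cast_zero, add_zero]; omega
      | succ m IH =>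
        intro a ha1 had
        have h1 : g a < g (a + m) + 1 := IH a ha1 (by push_cast; push_cast at had; omega)
        have h2 : g (a + m) < g (a + m + 1) := by
          have := hmono (a + m).toNat (by push_cast; push_cast at had; omega)
            (by push_cast; push_cast at had; omega)
          have he : ((a + m).toNat : ℤ) = a + m := by push_cast at had ⊢; omega
          rw [he] at this
          exact this
        have h3 : a + ((m:ℤ)+1) = a + (m:ℤ) + 1 := by ring
        push_cast
        rw [h3]
        push_cast at h1 h2
        omega
    have hlt : ∀ a b : ℤ, 1 ≤ a → a < b → b ≤ d → g a < g b := by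
      intro a b ha hab hbd
      have hm := hchain (b - a - 1).toNat a ha (by omega)
      have h2 : g (b - 1) < g b := by
        have hx := hmono (b-1).toNat (by omega) (by push_cast; omega)
        have he : ((b-1).toNat : ℤ) = b - 1 := by omega
        rw [he] at hx
        have he3 : b - 1 + 1 = b := by omega
        rw [he3] at hx
        exact hx
      have he2 : (a + ((b-a-1).toNat:ℤ)) = b - 1 := by omega
      rw [he2] at hm
      omega
    -- all values positive
    have hpos : ∀ a : ℤ, 1 ≤ a → a ≤ d → 0 < g a := by
      intro a ha had
      rcases eq_or_lt_of_le ha with h1 | h1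
      · rw [← h1]; exact h1pos
      · have := hlt 1 a (by omega) (by omega) had
        omega
    -- g a ≥ a by induction
    have hge : ∀ m : ℕ, 1 ≤ (m:ℤ) → (m:ℤ) ≤ d → (m:ℤ) ≤ g m := by
      intro m
      induction m with
      | zero => intro h1 _; norm_num at h1
      | succ m IH =>
        intro h1 h2
        rcases Nat.eq_zero_or_pos m with hm0 | hm0
        · subst hm0
          have := hpos 1 le_rfl (by push_cast at h2 ⊢; omega)
          push_cast
          push_cast at this
          omega
        · have hIH := IH (by push_cast; omega) (by push_cast at h2 ⊢; omega)
          have := hlt m (m+1) (by push_cast; omega) (by omega)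
            (by push_cast at h2 ⊢; omega)
          push_cast at hIH this ⊢
          omega
    -- g a ≤ a by downward induction
    have hled : ∀ m : ℕ, ∀ a : ℤ, 1 ≤ a → a ≤ d → a = (d:ℤ) - m → g a ≤ a := by
      intro m
      induction m with
      | zero =>
        intro a ha had hae
        obtain ⟨hb1, hb2⟩ := W_bound' hg (r := a) (by omega) (by omega)
        omega
      | succ m IH =>
        intro a ha had hae
        have h2 : g a < g (a + 1) := by
          have := hlt a (a+1) ha (by omega) (by omega)
          exact this
        have h3 : g (a+1) ≤ a + 1 := IH (a+1) (by omega) (by omega) (by push_cast; push_cast at hae; omega)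
        omega
    -- conclude : g = 1
    ext r
    simp only [Equiv.Perm.one_apply]
    rcases le_or_gt r (-(d:ℤ)) with hr | hr
    · rcases eq_or_lt_of_le hr with h1 | h1
      · -- r = -d
        have hneg : g (-(d:ℤ)) = -(g d) := hg.1 d
        have hd1 : g (d:ℤ) = d := by
          have hge' := hge d (by omega) le_rfl
          have hled' := hled 0 d (by omega) le_rfl (by omega)
          omega
        rw [h1, hneg, hd1]
      · exact hg.2 r (by rw [abs_of_nonpos (by omega)]; omega)
    · rcases le_or_gt r 0 with hr2 | hr2
      · -- -d < r ≤ 0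
        rcases eq_or_lt_of_le hr2 with h1 | h1
        · rw [h1, W_zero hg]
        · have : g (-r) = -r := by
            have hge' := hge (-r).toNat (by omega) (by omega)
            have hled' := hled (d - (-r).toNat) (-r) (by omega) (by omega)
              (by omega)
            have he : ((-r).toNat : ℤ) = -r := by omega
            rw [he] at hge'
            omega
          have h2 : g r = -(g (-r)) := by
            have := hg.1 (-r)
            simp only [neg_neg] at this
            omega
          omega
      · rcases le_or_gt r (d:ℤ) with hr3 | hr3
        · have hge' := hge r.toNat (by omega) (by omega)
          have hled' := hled (d - r.toNat) r (by omega) (by omega) (by omega)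
          have he : (r.toNat : ℤ) = r := by omega
          rw [he] at hge'
          omega
        · exact hg.2 r (by rw [abs_of_pos (by omega)]; omega)

lemma L_one (d : ℕ) : L d (1 : Equiv.Perm ℤ) = 0 := by
  unfold L NF
  rw [Finset.card_eq_zero, Finset.filter_eq_empty_iff]
  intro c hc
  obtain ⟨_, _, hlt, _⟩ := mem_PRF.mp hc
  simp only [Equiv.Perm.one_apply]
  omega

lemma exists_word {d : ℕ} {g : Equiv.Perm ℤ} (hg : g ∈ W d) :
    ∃ l : List (Equiv.Perm ℤ), (∀ x ∈ l, ∃ i, i < d ∧ x = s i) ∧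
      l.length = L d g ∧ l.prod = g := by
  classical
  suffices h : ∀ m : ℕ, ∀ g : Equiv.Perm ℤ, g ∈ W d → L d g = m →
      ∃ l : List (Equiv.Perm ℤ), (∀ x ∈ l, ∃ i, i < d ∧ x = s i) ∧
        l.length = L d g ∧ l.prod = g by
    exact h (L d g) g hg rfl
  intro m
  induction m using Nat.strong_induction_on with
  | _ m IH =>
    intro g hg hLg
    by_cases hdesc : ∃ i : ℕ, i < d ∧ g (alpha i).2 < g (alpha i).1
    · obtain ⟨i, hid, hinv⟩ := hdesc
      have hA := (L_mul_s hid hg).1 hinv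
      have hg' : g * s i ∈ W d := W_mul hg (s_mem_W hid)
      obtain ⟨l, hl1, hl2, hl3⟩ := IH (L d (g * s i)) (by omega) (g * s i) hg' rfl
      refine ⟨l ++ [s i], ?_, ?_, ?_⟩
      · intro x hx
        rcases List.mem_append.mp hx with h1 | h1
        · exact hl1 x h1
        · rw [List.mem_singleton.mp h1]; exact ⟨i, hid, rfl⟩
      · rw [List.length_append, hl2]
        simp only [List.length_singleton]
        omega
      · rw [List.prod_append, hl3, List.prod_singleton, mul_assoc, s_mul_self,
          mul_one]
    · push_neg at hdesc
      have hg1 : g = 1 := no_descent_eq_one hg (fun i hi => not_lt.mpr (hdesc i hi))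
      subst hg1
      exact ⟨[], by simp, by simp [L_one], by simp⟩

lemma word_ge {d : ℕ} (l : List (Equiv.Perm ℤ))
    (hl : ∀ x ∈ l, ∃ i, i < d ∧ x = s i) :
    l.prod ∈ W d ∧ L d l.prod ≤ l.length := by
  induction l using List.reverseRecOn with
  | nil => simp [W_one, L_one]
  | append_singleton l x IH =>
    obtain ⟨IH1, IH2⟩ := IH (fun y hy => hl y (List.mem_append.mpr (Or.inl hy)))
    obtain ⟨i, hid, rfl⟩ := hl x (List.mem_append.mpr (Or.inr (List.mem_singleton.mpr rfl)))
    rw [List.prod_append, List.prod_singleton]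
    refine ⟨W_mul IH1 (s_mem_W hid), ?_⟩
    have := L_mul_s hid IH1
    rw [List.length_append, List.length_singleton]
    by_cases hinv : l.prod (alpha i).2 < l.prod (alpha i).1
    · have := this.1 hinv; omega
    · have := this.2 hinv; omega

lemma len_eq_L {d : ℕ} {g : Equiv.Perm ℤ} (hg : g ∈ W d) : len d g = L d g := by
  obtain ⟨l, hl1, hl2, hl3⟩ := exists_word hg
  unfold len
  apply le_antisymm
  · exact Nat.sInf_le ⟨l, hl1, hl2, hl3⟩
  · refine le_csInf ⟨L d g, ?_⟩ ?_
    · exact ⟨l, hl1, hl2, hl3⟩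
    rintro b ⟨l', hl1', hl2', hl3'⟩
    have := (word_ge l' hl1').2
    rw [hl2', hl3'] at this
    exact this

lemma len_inv {d : ℕ} {g : Equiv.Perm ℤ} (hg : g ∈ W d) :
    len d g⁻¹ = len d g := by
  rw [len_eq_L (W_inv hg), len_eq_L hg, L_inv hg]

lemma len_s {d i : ℕ} (hid : i < d) : len d (s i) = 1 := by
  rw [len_eq_L (s_mem_W hid)]
  have h := (L_mul_s hid (W_one d)).2 (by
    simp only [Equiv.Perm.one_apply]
    have := alpha_lt i
    omega)
  rw [one_mul, L_one] at h
  exact h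
/-! ### Descent characterizations and `lenc` bookkeeping -/

lemma len_mul_s_lt {d i : ℕ} (hid : i < d) {g : Equiv.Perm ℤ} (hg : g ∈ W d)
    (h : g (alpha i).2 < g (alpha i).1) : len d (g * s i) + 1 = len d g := by
  rw [len_eq_L (W_mul hg (s_mem_W hid)), len_eq_L hg]
  exact (L_mul_s hid hg).1 h

lemma len_mul_s_gt {d i : ℕ} (hid : i < d) {g : Equiv.Perm ℤ} (hg : g ∈ W d)
    (h : ¬ g (alpha i).2 < g (alpha i).1) : len d (g * s i) = len d g + 1 := by
  rw [len_eq_L (W_mul hg (s_mem_W hid)), len_eq_L hg]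
  exact (L_mul_s hid hg).2 h

lemma s_inv (i : ℕ) : (s i)⁻¹ = s i := by
  rw [eq_comm, eq_inv_iff_mul_eq_one, s_mul_self]

lemma len_s_mul {d i : ℕ} (hid : i < d) {g : Equiv.Perm ℤ} (hg : g ∈ W d) :
    len d (s i * g) = len d (g⁻¹ * s i) := by
  have h : (s i * g)⁻¹ = g⁻¹ * s i := by rw [mul_inv_rev, s_inv]
  rw [← h, len_inv (W_mul (s_mem_W hid) hg)]

lemma len_s_mul_lt {d i : ℕ} (hid : i < d) {g : Equiv.Perm ℤ} (hg : g ∈ W d)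
    (h : g⁻¹ (alpha i).2 < g⁻¹ (alpha i).1) : len d (s i * g) + 1 = len d g := by
  rw [len_s_mul hid hg, ← len_inv hg]
  exact len_mul_s_lt hid (W_inv hg) h

lemma len_s_mul_gt {d i : ℕ} (hid : i < d) {g : Equiv.Perm ℤ} (hg : g ∈ W d)
    (h : ¬ g⁻¹ (alpha i).2 < g⁻¹ (alpha i).1) : len d (s i * g) = len d g + 1 := by
  rw [len_s_mul hid hg, ← len_inv hg]
  exact len_mul_s_gt hid (W_inv hg) h

lemma s_sign {i : ℕ} (hi : 1 ≤ i) (r : ℤ) : s i r < 0 ↔ r < 0 := by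
  rw [s_apply]; unfold sFun
  have hi' : (1:ℤ) ≤ (i:ℤ) := by exact_mod_cast hi
  rw [if_neg (by omega)]
  split_ifs <;> omega

lemma s_maps_pos {d i : ℕ} (hi : 1 ≤ i) (hid : i < d) {p : ℤ}
    (hp : 1 ≤ p ∧ p ≤ (d:ℤ)) : 1 ≤ s i p ∧ s i p ≤ (d:ℤ) := by
  rw [s_apply]; unfold sFun
  have hi' : (1:ℤ) ≤ (i:ℤ) := by exact_mod_cast hi
  have hid' : (i:ℤ) + 1 ≤ (d:ℤ) := by exact_mod_cast hid
  rw [if_neg (by omega)]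
  split_ifs <;> omega

lemma lenc_mul_s_right {d i : ℕ} (hi : 1 ≤ i) (hid : i < d)
    {z : Equiv.Perm ℤ} : lenc d (z * s i) = lenc d z := by
  unfold lenc
  apply Finset.card_bij' (fun p _ => s i p) (fun p _ => s i p)
  · intro p hp
    simp only [Finset.mem_filter, Finset.mem_Icc] at hp ⊢
    obtain ⟨hm, hlt⟩ := hp
    refine ⟨?_, ?_⟩
    · have := s_maps_pos hi hid (p := p) ⟨hm.1, hm.2⟩
      exact ⟨this.1, this.2⟩
    · simpa only [Equiv.Perm.mul_apply] using hlt
  · intro p hp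
    simp only [Finset.mem_filter, Finset.mem_Icc] at hp ⊢
    obtain ⟨hm, hlt⟩ := hp
    refine ⟨?_, ?_⟩
    · have := s_maps_pos hi hid (p := p) ⟨hm.1, hm.2⟩
      exact ⟨this.1, this.2⟩
    · simp only [Equiv.Perm.mul_apply, s_apply_self]
      exact hlt
  · intro p _; exact s_apply_self i p
  · intro p _; exact s_apply_self i p

lemma s0_apply (r : ℤ) : s 0 r = if r = -1 then 1 else if r = 1 then -1 else r := by
  rw [s_apply]; unfold sFun; norm_num

lemma lenc_mul_s0_right {d : ℕ} (hd : 1 ≤ d) {z : Equiv.Perm ℤ} (hz : z ∈ W d)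
    (hz1 : z 1 < 0) : lenc d (z * s 0) + 1 = lenc d z := by
  unfold lenc
  have h1m : (1:ℤ) ∈ (Finset.Icc (1:ℤ) (d:ℤ)).filter (fun p => z p < 0) := by
    simp only [Finset.mem_filter, Finset.mem_Icc]
    exact ⟨⟨le_rfl, by exact_mod_cast hd⟩, hz1⟩
  have hzneg : z (-1) = -(z 1) := hz.1 1
  have key : (Finset.Icc (1:ℤ) (d:ℤ)).filter (fun p => (z * s 0) p < 0)
      = ((Finset.Icc (1:ℤ) (d:ℤ)).filter (fun p => z p < 0)).erase 1 := by
    ext p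
    simp only [Finset.mem_filter, Finset.mem_erase, Finset.mem_Icc]
    simp only [Equiv.Perm.mul_apply]
    by_cases hp1 : p = 1
    · subst hp1
      rw [s0_apply, if_neg (by norm_num), if_pos rfl]
      constructor
      · rintro ⟨_, hlt⟩; exfalso; omega
      · rintro ⟨hne, _⟩; exact absurd rfl hne
    · by_cases hpm : p = -1
      · subst hpm
        constructor
        · rintro ⟨⟨hle, _⟩, _⟩; exfalso; omega
        · rintro ⟨_, ⟨hle, _⟩, _⟩; exfalso; omega
      · rw [s0_apply, if_neg hpm, if_neg hp1]
        tauto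
  rw [key, Finset.card_erase_of_mem h1m]
  have : 1 ≤ ((Finset.Icc (1:ℤ) (d:ℤ)).filter (fun p => z p < 0)).card :=
    Finset.card_pos.mpr ⟨1, h1m⟩
  omega

lemma lenc_s0_mul_left {d : ℕ} (hd : 1 ≤ d) {z : Equiv.Perm ℤ} (hz : z ∈ W d)
    (h1 : z⁻¹ 1 < 0) : lenc d (s 0 * z) + 1 = lenc d z := by
  have hd' : (1:ℤ) ≤ (d:ℤ) := by exact_mod_cast hd
  unfold lenc
  set p1 : ℤ := -(z⁻¹ 1) with hp1def
  have hzinv : z⁻¹ (-(1:ℤ)) = -(z⁻¹ 1) := (W_inv hz).1 1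
  have hzp1 : z p1 = -1 := by
    rw [hp1def, ← hzinv, Equiv.Perm.apply_inv_self]
  obtain ⟨hb1, hb2⟩ := W_bound' (W_inv hz) (r := 1) (by omega) (by omega)
  have hp1m : p1 ∈ (Finset.Icc (1:ℤ) (d:ℤ)).filter (fun p => z p < 0) := by
    simp only [Finset.mem_filter, Finset.mem_Icc]
    exact ⟨⟨by omega, by omega⟩, by rw [hzp1]; omega⟩
  have key : (Finset.Icc (1:ℤ) (d:ℤ)).filter (fun p => (s 0 * z) p < 0)
      = ((Finset.Icc (1:ℤ) (d:ℤ)).filter (fun p => z p < 0)).erase p1 := by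
    ext p
    simp only [Finset.mem_filter, Finset.mem_erase, Finset.mem_Icc]
    simp only [Equiv.Perm.mul_apply]
    by_cases hpp : p = p1
    · subst hpp
      rw [hzp1, s0_apply, if_pos rfl]
      constructor
      · rintro ⟨_, hlt⟩; exfalso; omega
      · rintro ⟨hne, _⟩; exact absurd rfl hne
    · have hne1 : z p ≠ -1 := by
        intro he
        have : p = z⁻¹ (-1) := by rw [← he, Equiv.Perm.inv_apply_self]
        rw [hzinv] at this
        exact hpp this
      constructor
      · rintro ⟨hm, hlt⟩
        rw [s0_apply, if_neg hne1] at hlt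
        by_cases hz1 : z p = 1
        · rw [if_pos hz1] at hlt
          exfalso
          have : p = z⁻¹ 1 := by rw [← hz1, Equiv.Perm.inv_apply_self]
          omega
        · rw [if_neg hz1] at hlt
          exact ⟨hpp, hm, hlt⟩
      · rintro ⟨_, hm, hlt⟩
        refine ⟨hm, ?_⟩
        rw [s0_apply, if_neg hne1, if_neg (by omega)]
        exact hlt
  rw [key, Finset.card_erase_of_mem hp1m]
  have : 1 ≤ ((Finset.Icc (1:ℤ) (d:ℤ)).filter (fun p => z p < 0)).card :=
    Finset.card_pos.mpr ⟨p1, hp1m⟩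
  omega

lemma lenc_s_mul_left {d i : ℕ} (hi : 1 ≤ i) {z : Equiv.Perm ℤ} :
    lenc d (s i * z) = lenc d z := by
  unfold lenc
  congr 1
  apply Finset.filter_congr
  intro p _
  simp only [Equiv.Perm.mul_apply, s_sign hi]
/-! ### Blocks -/

/-- Index `i` is an allowed simple reflection for the parabolic `W_λ`. -/
def alw (d n : ℕ) (lam : ℕ → ℕ) (i : ℕ) : Prop :=
  i < d ∧ ∀ k, k < n → i ≠ psum lam k

/-- auxiliary block index -/
def blkAux (lam : ℕ → ℕ) (n : ℕ) (m : ℤ) : ℕ :=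
  ((Finset.range (n+1)).filter (fun k => (psum lam k : ℤ) < m)).card

/-- The signed block index of `m ∈ [-d,d]`. -/
def blk (lam : ℕ → ℕ) (n : ℕ) (m : ℤ) : ℤ :=
  if m < 0 then -(blkAux lam n (-m) : ℤ) else (blkAux lam n m : ℤ)

lemma blkAux_mono (lam : ℕ → ℕ) (n : ℕ) {m m' : ℤ} (h : m ≤ m') :
    blkAux lam n m ≤ blkAux lam n m' := by
  apply Finset.card_le_card
  intro k hk
  simp only [Finset.mem_filter] at hk ⊢
  exact ⟨hk.1, by omega⟩

lemma blkAux_zero (lam : ℕ → ℕ) (n : ℕ) {m : ℤ} (h : m ≤ 0) :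
    blkAux lam n m = 0 := by
  unfold blkAux
  rw [Finset.card_eq_zero, Finset.filter_eq_empty_iff]
  intro k _
  have : (0:ℤ) ≤ (psum lam k : ℤ) := Int.natCast_nonneg _
  omega

lemma blk_mono (lam : ℕ → ℕ) (n : ℕ) {m m' : ℤ} (h : m ≤ m') :
    blk lam n m ≤ blk lam n m' := by
  unfold blk
  split_ifs with h1 h2 h2
  · have := blkAux_mono lam n (m := -m') (m' := -m) (by omega)
    omega
  · have h3 : (0:ℤ) ≤ (blkAux lam n (-m) : ℤ) := Int.natCast_nonneg _
    have h4 : (0:ℤ) ≤ (blkAux lam n m' : ℤ) := Int.natCast_nonneg _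
    omega
  · omega
  · have := blkAux_mono lam n h
    omega

lemma blk_neg (lam : ℕ → ℕ) (n : ℕ) (m : ℤ) :
    blk lam n (-m) = -(blk lam n m) := by
  unfold blk
  rcases lt_trichotomy m 0 with h | h | h
  · rw [if_neg (by omega), if_pos h]; ring
  · subst h; norm_num
    rw [blkAux_zero lam n le_rfl]
  · rw [if_pos (by omega), if_neg (by omega)]
    simp only [neg_neg]

lemma psum_le_psum (lam : ℕ → ℕ) {k k' : ℕ} (h : k ≤ k') :
    psum lam k ≤ psum lam k' := by
  unfold psum
  exact Finset.sum_le_sum_of_subset (Finset.range_subset_range.mpr (by omega))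

lemma blkAux_alw {d n : ℕ} {lam : ℕ → ℕ} (hlam : psum lam n = d) {i : ℕ}
    (ha : alw d n lam i) : blkAux lam n (i:ℤ) = blkAux lam n ((i:ℤ)+1) := by
  unfold blkAux
  congr 1
  apply Finset.filter_congr
  intro k hk
  simp only [Finset.mem_range] at hk
  constructor
  · intro h; omega
  · intro h
    have hne : psum lam k ≠ i := by
      have hid := ha.1
      rcases Nat.lt_or_ge k n with h1 | h1
      · exact fun he => (ha.2 k h1) he.symm
      · have hkn : k = n := by omega
        subst hkn
        rw [hlam]
        omega
    have : (psum lam k : ℤ) ≠ (i:ℤ) := by exact_mod_cast hne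
    omega

lemma blkAux_one_eq_zero {d n : ℕ} {lam : ℕ → ℕ} (hlam : psum lam n = d)
    (ha : alw d n lam 0) : blkAux lam n 1 = 0 := by
  unfold blkAux
  rw [Finset.card_eq_zero, Finset.filter_eq_empty_iff]
  intro k hk
  simp only [Finset.mem_range] at hk
  show ¬ ((psum lam k : ℤ) < 1)
  have : 1 ≤ psum lam k := by
    have hid := ha.1
    rcases Nat.lt_or_ge k n with h1 | h1
    · have := ha.2 k h1
      omega
    · have hkn : k = n := by omega
      subst hkn
      rw [hlam]
      omega
  have h2 : (1:ℤ) ≤ (psum lam k : ℤ) := by exact_mod_cast this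
  omega

lemma s_blk {d n : ℕ} {lam : ℕ → ℕ} (hlam : psum lam n = d) {i : ℕ}
    (ha : alw d n lam i) (r : ℤ) : blk lam n (s i r) = blk lam n r := by
  rw [s_apply]; unfold sFun
  by_cases h0 : i = 0
  · subst h0
    simp only [if_true, reduceIte]
    have h1 : blkAux lam n 1 = 0 := blkAux_one_eq_zero hlam ha
    split_ifs with e1 e2
    · subst e1
      unfold blk
      rw [if_neg (by omega), if_pos (by omega)]
      simp only [neg_neg]
      rw [h1]; norm_num
    · subst e2
      unfold blk
      rw [if_pos (by omega), if_neg (by omega)]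
      simp only [neg_neg]
      rw [h1]; norm_num
    · rfl
  · have hi : (1:ℤ) ≤ (i:ℤ) := by exact_mod_cast Nat.one_le_iff_ne_zero.mpr h0
    have hb := blkAux_alw hlam ha
    rw [if_neg h0]
    split_ifs with e1 e2 e3 e4
    · subst e1
      unfold blk
      rw [if_neg (by omega), if_neg (by omega), hb]
    · subst e2
      unfold blk
      rw [if_neg (by omega), if_neg (by omega), hb]
    · subst e3
      unfold blk
      rw [if_pos (by omega), if_pos (by omega)]
      simp only [neg_neg]
      rw [show -(-(i:ℤ)-1) = (i:ℤ)+1 by ring, hb]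
    · subst e4
      unfold blk
      rw [if_pos (by omega), if_pos (by omega)]
      simp only [neg_neg]
      rw [show -(-(i:ℤ)-1) = (i:ℤ)+1 by ring, hb]
    · rfl

lemma Wpar_blk {d n : ℕ} {lam : ℕ → ℕ} (hlam : psum lam n = d)
    {x : Equiv.Perm ℤ} (hx : x ∈ Wpar d n lam) (r : ℤ) :
    blk lam n (x r) = blk lam n r := by
  revert r
  unfold Wpar at hx
  induction hx using Subgroup.closure_induction with
  | mem x hxs =>
    obtain ⟨i, hi, hk, rfl⟩ := hxs
    exact fun r => s_blk hlam ⟨hi, hk⟩ r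
  | one => exact fun r => rfl
  | mul a b _ _ IH1 IH2 =>
    intro r
    simp only [Equiv.Perm.mul_apply]
    rw [IH1, IH2]
  | inv a _ IH =>
    intro r
    have := IH (a⁻¹ r)
    rw [Equiv.Perm.apply_inv_self] at this
    rw [← this]

lemma blk_step {d n : ℕ} {lam : ℕ → ℕ} (hlam : psum lam n = d) {p : ℤ}
    (h1 : 1 ≤ p) (hpd : p + 1 ≤ (d:ℤ))
    (hblk : blk lam n p = blk lam n (p+1)) : alw d n lam p.toNat := by
  have hb : blkAux lam n p = blkAux lam n (p+1) := by
    unfold blk at hblk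
    rw [if_neg (by omega), if_neg (by omega)] at hblk
    exact_mod_cast hblk
  constructor
  · omega
  · intro k hk he
    -- p = psum lam k gives a strict increase of blkAux
    have hmem : k ∈ (Finset.range (n+1)).filter
        (fun k => (psum lam k : ℤ) < p + 1) := by
      simp only [Finset.mem_filter, Finset.mem_range]
      constructor
      · omega
      · have : (psum lam k : ℤ) = p := by omega
        omega
    have hnotmem : k ∉ (Finset.range (n+1)).filter
        (fun k => (psum lam k : ℤ) < p) := by
      simp only [Finset.mem_filter, Finset.mem_range, not_and, not_lt]
      intro _
      omega
    have hss : (Finset.range (n+1)).filter (fun k => (psum lam k : ℤ) < p)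
        ⊂ (Finset.range (n+1)).filter (fun k => (psum lam k : ℤ) < p + 1) := by
      constructor
      · intro j hj
        simp only [Finset.mem_filter] at hj ⊢
        exact ⟨hj.1, by omega⟩
      · intro hsub
        exact hnotmem (hsub hmem)
    have := Finset.card_lt_card hss
    unfold blkAux at hb
    omega
/-! ### Reduced elements are block-monotone -/

/-- `g` has no right descent at any allowed position (combinatorial form). -/
def redR (d n : ℕ) (nu : ℕ → ℕ) (g : Equiv.Perm ℤ) : Prop :=
  (∀ i : ℕ, 1 ≤ i → alw d n nu i → g (i:ℤ) < g ((i:ℤ)+1)) ∧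
    (alw d n nu 0 → 0 < g 1)

lemma blkAux_one_alw {d n : ℕ} {nu : ℕ → ℕ} (hnu : psum nu n = d) (hd : 1 ≤ d)
    (h : blkAux nu n 1 = 0) : alw d n nu 0 := by
  refine ⟨hd, fun k hk he => ?_⟩
  have hmem : k ∈ (Finset.range (n+1)).filter
      (fun k => (psum nu k : ℤ) < 1) := by
    simp only [Finset.mem_filter, Finset.mem_range]
    constructor
    · omega
    · show (psum nu k : ℤ) < 1
      omega
  unfold blkAux at h
  rw [Finset.card_eq_zero] at h
  rw [h] at hmem
  exact absurd hmem (Finset.notMem_empty k)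

lemma red_step {d n : ℕ} {nu : ℕ → ℕ} (hnu : psum nu n = d)
    {g : Equiv.Perm ℤ} (hg : g ∈ W d) (hr : redR d n nu g) :
    ∀ p : ℤ, -(d:ℤ) ≤ p → p + 1 ≤ (d:ℤ) → blk nu n p = blk nu n (p+1) →
      g p < g (p+1) := by
  have hpos : ∀ p : ℤ, 1 ≤ p → p + 1 ≤ (d:ℤ) →
      blk nu n p = blk nu n (p+1) → g p < g (p+1) := by
    intro p h1 h2 hb
    have ha := blk_step hnu h1 h2 hb
    have h3 := hr.1 p.toNat (by omega) ha
    have he : (p.toNat : ℤ) = p := by omega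
    rw [he] at h3
    exact h3
  intro p h1 h2 hb
  rcases le_or_gt 1 p with hp | hp
  · exact hpos p hp h2 hb
  rcases le_or_gt p (-2) with hp2 | hp2
  · -- mirror
    have e1 : blk nu n p = -(blk nu n (-p)) := by
      rw [← blk_neg]; norm_num
    have e2 : blk nu n (p+1) = -(blk nu n (-p-1)) := by
      rw [← blk_neg]; congr 1; ring
    have hbb : blk nu n (-p-1) = blk nu n (-p-1+1) := by
      rw [show (-p-1+1 : ℤ) = -p by ring]
      omega
    have hq := hpos (-p-1) (by omega) (by omega) hbb
    rw [show (-p-1+1:ℤ) = -p by ring] at hq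
    have e1 : g p = -(g (-p)) := by
      have := hg.1 (-p); simp only [neg_neg] at this; omega
    have e2 : g (p+1) = -(g (-p-1)) := by
      have := hg.1 (-p-1)
      have e : -(-p-1) = p + 1 := by ring
      rw [e] at this
      omega
    omega
  · -- p = 0 or p = -1
    have hd1 : (1:ℤ) ≤ (d:ℤ) := by omega
    have hblk1 : blk nu n 1 = (blkAux nu n 1 : ℤ) := by
      unfold blk; rw [if_neg (by omega)]
    have hblk0 : blk nu n 0 = 0 := by
      unfold blk; rw [if_neg (by omega), blkAux_zero nu n le_rfl]; norm_num
    have hblkm1 : blk nu n (-1) = -(blkAux nu n 1 : ℤ) := by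
      have h := blk_neg nu n 1
      rw [hblk1] at h
      exact h
    interval_cases p
    · -- p = -1
      have hb1 : blkAux nu n 1 = 0 := by
        rw [show ((-1:ℤ)+1) = 0 by ring] at hb
        rw [hblkm1, hblk0] at hb
        omega
      have h01 := (hr.2 (blkAux_one_alw hnu (by exact_mod_cast hd1) hb1))
      have e1 : g (-1) = -(g 1) := hg.1 1
      have e2 : (-1:ℤ) + 1 = 0 := by ring
      rw [e2, W_zero hg]
      omega
    · -- p = 0
      have hb1 : blkAux nu n 1 = 0 := by
        rw [show ((0:ℤ)+1) = 1 by ring] at hb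
        rw [hblk0, hblk1] at hb
        omega
      have h01 := (hr.2 (blkAux_one_alw hnu (by exact_mod_cast hd1) hb1))
      rw [W_zero hg]
      have e2 : (0:ℤ) + 1 = 1 := by ring
      rw [e2]
      exact h01

lemma red_mono {d n : ℕ} {nu : ℕ → ℕ} (hnu : psum nu n = d)
    {g : Equiv.Perm ℤ} (hg : g ∈ W d) (hr : redR d n nu g) :
    ∀ p q : ℤ, -(d:ℤ) ≤ p → q ≤ (d:ℤ) → p < q → blk nu n p = blk nu n q →
      g p < g q := by
  have key : ∀ k : ℕ, ∀ p : ℤ, -(d:ℤ) ≤ p → p + (k:ℤ) + 1 ≤ (d:ℤ) →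
      blk nu n p = blk nu n (p + (k:ℤ) + 1) → g p < g (p + (k:ℤ) + 1) := by
    intro k
    induction k with
    | zero =>
      intro p h1 h2 hb
      push_cast at hb h2 ⊢
      rw [show p + 0 + 1 = p + 1 by ring] at hb ⊢
      exact red_step hnu hg hr p h1 (by omega) hb
    | succ k IH =>
      intro p h1 h2 hb
      push_cast at hb h2 ⊢
      have hble : blk nu n p ≤ blk nu n (p + (k:ℤ) + 1) :=
        blk_mono nu n (by omega)
      have hbge : blk nu n (p + (k:ℤ) + 1) ≤ blk nu n (p + ((k:ℤ)+1) + 1) :=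
        blk_mono nu n (by omega)
      have hb1 : blk nu n p = blk nu n (p + (k:ℤ) + 1) := by omega
      have hb2 : blk nu n (p + (k:ℤ) + 1) = blk nu n (p + (k:ℤ) + 1 + 1) := by
        have e : p + ((k:ℤ)+1) + 1 = p + (k:ℤ) + 1 + 1 := by ring
        rw [e] at hb
        omega
      have hx := IH p h1 (by omega) hb1
      have hy := red_step hnu hg hr (p + (k:ℤ) + 1) (by omega) (by omega) hb2
      have e : p + ((k:ℤ)+1) + 1 = p + (k:ℤ) + 1 + 1 := by ring
      rw [e]
      omega
  intro p q h1 h2 hlt hb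
  have hk := key (q - p - 1).toNat p h1 (by omega)
  have he : p + ((q - p - 1).toNat : ℤ) + 1 = q := by omega
  rw [he] at hk
  exact hk hb

/-! ### Two generic uniqueness lemmas for monotone functions -/

lemma mono_count_eq :
    ∀ (N : ℕ) (S : Finset ℤ) (f g : ℤ → ℤ), S.card = N →
    (∀ p ∈ S, ∀ q ∈ S, p < q → f p ≤ f q) →
    (∀ p ∈ S, ∀ q ∈ S, p < q → g p ≤ g q) →
    (∀ v : ℤ, (S.filter (fun p => f p = v)).card
      = (S.filter (fun p => g p = v)).card) →
    ∀ p ∈ S, f p = g p := by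
  intro N
  induction N using Nat.strong_induction_on with
  | _ N IH =>
    intro S f g hcard hf hg hcount p hp
    have hne : S.Nonempty := ⟨p, hp⟩
    set m := S.min' hne with hm
    have hmS : m ∈ S := S.min'_mem hne
    have hfm : f m = g m := by
      have h1 : ∃ q ∈ S, g q = f m := by
        have hpos : 0 < (S.filter (fun p => f p = f m)).card :=
          Finset.card_pos.mpr ⟨m, Finset.mem_filter.mpr ⟨hmS, rfl⟩⟩
        rw [hcount (f m)] at hpos
        obtain ⟨q, hq⟩ := Finset.card_pos.mp hpos
        simp only [Finset.mem_filter] at hq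
        exact ⟨q, hq.1, hq.2⟩
      have h2 : ∃ q ∈ S, f q = g m := by
        have hpos : 0 < (S.filter (fun p => g p = g m)).card :=
          Finset.card_pos.mpr ⟨m, Finset.mem_filter.mpr ⟨hmS, rfl⟩⟩
        rw [← hcount (g m)] at hpos
        obtain ⟨q, hq⟩ := Finset.card_pos.mp hpos
        simp only [Finset.mem_filter] at hq
        exact ⟨q, hq.1, hq.2⟩
      obtain ⟨q1, hq1S, hq1⟩ := h1
      obtain ⟨q2, hq2S, hq2⟩ := h2
      have hgm : g m ≤ f m := by
        rcases eq_or_lt_of_le (S.min'_le q1 hq1S) with h | h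
        · rw [← hm] at h; rw [← h] at hq1; omega
        · have := hg m hmS q1 hq1S (by rw [hm]; exact h)
          omega
      have hfm' : f m ≤ g m := by
        rcases eq_or_lt_of_le (S.min'_le q2 hq2S) with h | h
        · rw [← hm] at h; rw [← h] at hq2; omega
        · have := hf m hmS q2 hq2S (by rw [hm]; exact h)
          omega
      omega
    by_cases hpm : p = m
    · rw [hpm]; exact hfm
    · have hcard' : (S.erase m).card = N - 1 := by
        rw [Finset.card_erase_of_mem hmS, hcard]
      have hN : 1 ≤ N := by
        rw [← hcard]
        exact Finset.card_pos.mpr hne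
      apply IH (N-1) (by omega) (S.erase m) f g hcard'
      · intro a ha b hb hab
        exact hf a (Finset.mem_of_mem_erase ha) b (Finset.mem_of_mem_erase hb) hab
      · intro a ha b hb hab
        exact hg a (Finset.mem_of_mem_erase ha) b (Finset.mem_of_mem_erase hb) hab
      · intro v
        rw [Finset.filter_erase, Finset.filter_erase]
        by_cases hv : f m = v
        · rw [Finset.card_erase_of_mem (s := S.filter (fun p => f p = v))
              (Finset.mem_filter.mpr ⟨hmS, hv⟩),
            Finset.card_erase_of_mem (s := S.filter (fun p => g p = v))
              (Finset.mem_filter.mpr ⟨hmS, by omega⟩),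
            hcount v]
        · rw [Finset.erase_eq_of_notMem (a := m)
              (s := S.filter (fun p => f p = v))
              (fun hc => hv (Finset.mem_filter.mp hc).2),
            Finset.erase_eq_of_notMem (a := m)
              (s := S.filter (fun p => g p = v))
              (fun hc => hv (by have := (Finset.mem_filter.mp hc).2; omega)),
            hcount v]
      · exact Finset.mem_erase.mpr ⟨hpm, hp⟩

lemma strict_image_eq :
    ∀ (N : ℕ) (S : Finset ℤ) (f g : ℤ → ℤ), S.card = N →
    (∀ p ∈ S, ∀ q ∈ S, p < q → f p < f q) →
    (∀ p ∈ S, ∀ q ∈ S, p < q → g p < g q) →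
    S.image f = S.image g →
    ∀ p ∈ S, f p = g p := by
  intro N
  induction N using Nat.strong_induction_on with
  | _ N IH =>
    intro S f g hcard hf hg him p hp
    have hne : S.Nonempty := ⟨p, hp⟩
    set m := S.min' hne with hm
    have hmS : m ∈ S := S.min'_mem hne
    have hfm : f m = g m := by
      have h1 : ∃ q ∈ S, f q = g m := by
        have hmem : g m ∈ S.image g := Finset.mem_image_of_mem g hmS
        rw [← him] at hmem
        obtain ⟨q, hqS, hq⟩ := Finset.mem_image.mp hmem
        exact ⟨q, hqS, hq⟩
      have h2 : ∃ q ∈ S, g q = f m := by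
        have hmem : f m ∈ S.image f := Finset.mem_image_of_mem f hmS
        rw [him] at hmem
        obtain ⟨q, hqS, hq⟩ := Finset.mem_image.mp hmem
        exact ⟨q, hqS, hq⟩
      obtain ⟨q1, hq1S, hq1⟩ := h1
      obtain ⟨q2, hq2S, hq2⟩ := h2
      have hle1 : f m ≤ g m := by
        rcases eq_or_lt_of_le (S.min'_le q1 hq1S) with h | h
        · rw [← hm] at h; rw [← h] at hq1; omega
        · have := hf m hmS q1 hq1S (by rw [hm]; exact h)
          omega
      have hle2 : g m ≤ f m := by
        rcases eq_or_lt_of_le (S.min'_le q2 hq2S) with h | h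
        · rw [← hm] at h; rw [← h] at hq2; omega
        · have := hg m hmS q2 hq2S (by rw [hm]; exact h)
          omega
      omega
    by_cases hpm : p = m
    · rw [hpm]; exact hfm
    · have hcard' : (S.erase m).card = N - 1 := by
        rw [Finset.card_erase_of_mem hmS, hcard]
      have hN : 1 ≤ N := by
        rw [← hcard]; exact Finset.card_pos.mpr hne
      have himage : ∀ (h : ℤ → ℤ), (∀ p ∈ S, ∀ q ∈ S, p < q → h p < h q) →
          (S.erase m).image h = (S.image h).erase (h m) := by
        intro h hmono
        ext v
        simp only [Finset.mem_image, Finset.mem_erase]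
        constructor
        · rintro ⟨q, hq, rfl⟩
          obtain ⟨hqm, hqS⟩ := hq
          refine ⟨?_, q, hqS, rfl⟩
          have : m < q := by
            rcases eq_or_lt_of_le (S.min'_le q hqS) with h1 | h1
            · rw [← hm] at h1; exact absurd h1.symm hqm
            · rw [hm]; exact h1
          have := hmono m hmS q hqS this
          omega
        · rintro ⟨hv, q, hqS, rfl⟩
          refine ⟨q, ⟨?_, hqS⟩, rfl⟩
          intro he; rw [he] at hv; exact hv rfl
      apply IH (N-1) (by omega) (S.erase m) f g hcard'
      · intro a ha b hb hab
        exact hf a (Finset.mem_of_mem_erase ha) b (Finset.mem_of_mem_erase hb) hab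
      · intro a ha b hb hab
        exact hg a (Finset.mem_of_mem_erase ha) b (Finset.mem_of_mem_erase hb) hab
      · rw [himage f hf, himage g hg, him, hfm]
      · exact Finset.mem_erase.mpr ⟨hpm, hp⟩
/-! ### Uniqueness of the two-sided reduced element in a double coset -/

lemma card_filter_image (g : Equiv.Perm ℤ) (X : Finset ℤ) (P : ℤ → Prop)
    [DecidablePred P] :
    ((X.image (fun r => g r)).filter P).card
      = (X.filter (fun p => P (g p))).card := by
  apply Finset.card_bij' (fun m _ => g⁻¹ m) (fun p _ => g p)
  · intro m hm
    simp only [Finset.mem_filter, Finset.mem_image] at hm ⊢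
    obtain ⟨⟨p, hpX, rfl⟩, hP⟩ := hm
    rw [Equiv.Perm.inv_apply_self]
    exact ⟨hpX, hP⟩
  · intro p hp
    simp only [Finset.mem_filter, Finset.mem_image] at hp ⊢
    exact ⟨⟨p, hp.1, rfl⟩, hp.2⟩
  · intro m _
    exact Equiv.Perm.apply_inv_self g m
  · intro p _
    exact Equiv.Perm.inv_apply_self g p

lemma image_filter_blk {d n : ℕ} {mu : ℕ → ℕ} {g : Equiv.Perm ℤ} (hg : g ∈ W d)
    (hblk : ∀ r, blk mu n (g r) = blk mu n r) (j : ℤ) :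
    ((Finset.Icc (-(d:ℤ)) (d:ℤ)).filter (fun r => blk mu n r = j)).image
        (fun r => g r)
      = (Finset.Icc (-(d:ℤ)) (d:ℤ)).filter (fun r => blk mu n r = j) := by
  apply Finset.eq_of_subset_of_card_le
  · intro m hm
    simp only [Finset.mem_image, Finset.mem_filter, Finset.mem_Icc] at hm ⊢
    obtain ⟨p, ⟨⟨hb1, hb2⟩, hbj⟩, rfl⟩ := hm
    obtain ⟨hc1, hc2⟩ := W_bound' hg hb1 hb2
    exact ⟨⟨hc1, hc2⟩, by rw [hblk]; exact hbj⟩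
  · rw [Finset.card_image_of_injective _ g.injective]

/-- The key uniqueness theorem: a two-sided reduced element of a double coset
is unique. -/
lemma recon {d n : ℕ} {lam nu : ℕ → ℕ}
    (hlam : psum lam n = d) (hnu : psum nu n = d)
    {z y a c : Equiv.Perm ℤ} (hz : z ∈ W d) (hy : y ∈ W d)
    (ha : a ∈ Wpar d n lam) (hc : c ∈ Wpar d n nu)
    (hzyac : z = a * y * c)
    (hzR : redR d n nu z) (hzL : redR d n lam z⁻¹)
    (hyR : redR d n nu y) (hyL : redR d n lam y⁻¹) : z = y := by
  classical
  have haW : a ∈ W d := Wpar_mem_W ha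
  have hcW : c ∈ W d := Wpar_mem_W hc
  have hablk : ∀ r, blk lam n (a r) = blk lam n r := Wpar_blk hlam ha
  have hcblk : ∀ r, blk nu n (c r) = blk nu n r := Wpar_blk hnu hc
  have hablk' : ∀ r, blk lam n (a⁻¹ r) = blk lam n r :=
    Wpar_blk hlam (inv_mem ha)
  have hcblk' : ∀ r, blk nu n (c⁻¹ r) = blk nu n r :=
    Wpar_blk hnu (inv_mem hc)
  have hzpt : ∀ p : ℤ, z p = a (y (c p)) := by
    intro p; rw [hzyac]; rfl
  have hzpt' : ∀ m : ℤ, z⁻¹ m = c⁻¹ (y⁻¹ (a⁻¹ m)) := by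
    intro m
    rw [hzyac]
    simp only [mul_inv_rev, Equiv.Perm.mul_apply]
  set Icd : Finset ℤ := Finset.Icc (-(d:ℤ)) (d:ℤ) with hIcd
  -- F5 : the λ-profile of z and y agree
  have F5 : ∀ p ∈ Icd, blk lam n (z p) = blk lam n (y p) := by
    intro p hp
    simp only [hIcd, Finset.mem_Icc] at hp
    set j := blk nu n p with hj
    set Cj : Finset ℤ := Icd.filter (fun r => blk nu n r = j) with hCj
    have hpC : p ∈ Cj := Finset.mem_filter.mpr
      ⟨by simp only [hIcd, Finset.mem_Icc]; omega, rfl⟩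
    have hmono : ∀ (g : Equiv.Perm ℤ), g ∈ W d → redR d n nu g →
        ∀ u ∈ Cj, ∀ w ∈ Cj, u < w → blk lam n (g u) ≤ blk lam n (g w) := by
      intro g hgW hgR u hu w hw huw
      simp only [hCj, hIcd, Finset.mem_filter, Finset.mem_Icc] at hu hw
      have := red_mono hnu hgW hgR u w hu.1.1 hw.1.2 huw (by rw [hu.2, hw.2])
      exact blk_mono lam n (by omega)
    have hcount : ∀ v : ℤ,
        (Cj.filter (fun q => blk lam n (z q) = v)).card
          = (Cj.filter (fun q => blk lam n (y q) = v)).card := by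
      intro v
      have e1 : Cj.filter (fun q => blk lam n (z q) = v)
          = Cj.filter (fun q => blk lam n (y (c q)) = v) := by
        apply Finset.filter_congr
        intro q _
        rw [hzpt q, hablk]
      have e2 : (Cj.filter (fun q => blk lam n (y (c q)) = v)).card
          = ((Cj.image (fun r => c r)).filter
              (fun m => blk lam n (y m) = v)).card := by
        rw [card_filter_image c Cj (fun m => blk lam n (y m) = v)]
      have e3 : Cj.image (fun r => c r) = Cj := by
        simp only [hCj, hIcd]
        exact image_filter_blk hcW hcblk j
      rw [e1, e2, e3]
    exact mono_count_eq Cj.card Cj (fun q => blk lam n (z q))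
      (fun q => blk lam n (y q)) rfl (hmono z hz hzR) (hmono y hy hyR)
      hcount p hpC
  -- F6 : the ν-profile of z⁻¹ and y⁻¹ agree
  have F6 : ∀ m ∈ Icd, blk nu n (z⁻¹ m) = blk nu n (y⁻¹ m) := by
    intro m hm
    simp only [hIcd, Finset.mem_Icc] at hm
    set i := blk lam n m with hi
    set Bi : Finset ℤ := Icd.filter (fun r => blk lam n r = i) with hBi
    have hmB : m ∈ Bi := Finset.mem_filter.mpr
      ⟨by simp only [hIcd, Finset.mem_Icc]; omega, rfl⟩
    have hmono : ∀ (g : Equiv.Perm ℤ), g⁻¹ ∈ W d → redR d n lam g⁻¹ →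
        ∀ u ∈ Bi, ∀ w ∈ Bi, u < w → blk nu n (g⁻¹ u) ≤ blk nu n (g⁻¹ w) := by
      intro g hgW hgR u hu w hw huw
      simp only [hBi, hIcd, Finset.mem_filter, Finset.mem_Icc] at hu hw
      have := red_mono hlam hgW hgR u w hu.1.1 hw.1.2 huw (by rw [hu.2, hw.2])
      exact blk_mono nu n (by omega)
    have hcount : ∀ v : ℤ,
        (Bi.filter (fun q => blk nu n (z⁻¹ q) = v)).card
          = (Bi.filter (fun q => blk nu n (y⁻¹ q) = v)).card := by
      intro v
      have e1 : Bi.filter (fun q => blk nu n (z⁻¹ q) = v)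
          = Bi.filter (fun q => blk nu n (y⁻¹ (a⁻¹ q)) = v) := by
        apply Finset.filter_congr
        intro q _
        rw [hzpt' q, hcblk']
      have e2 : (Bi.filter (fun q => blk nu n (y⁻¹ (a⁻¹ q)) = v)).card
          = ((Bi.image (fun r => a⁻¹ r)).filter
              (fun m => blk nu n (y⁻¹ m) = v)).card := by
        rw [card_filter_image a⁻¹ Bi (fun m => blk nu n (y⁻¹ m) = v)]
      have e3 : Bi.image (fun r => a⁻¹ r) = Bi := by
        simp only [hBi, hIcd]
        exact image_filter_blk (W_inv haW) hablk' i
      rw [e1, e2, e3]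
    exact mono_count_eq Bi.card Bi (fun q => blk nu n (z⁻¹ q))
      (fun q => blk nu n (y⁻¹ q)) rfl (hmono z (W_inv hz) hzL)
      (hmono y (W_inv hy) hyL) hcount m hmB
  -- cells
  ext p
  rcases le_or_gt p (-(d:ℤ)-1) with hout | hrest
  · rw [hz.2 p (by rw [abs_of_nonpos (by omega)]; omega),
      hy.2 p (by rw [abs_of_nonpos (by omega)]; omega)]
  rcases le_or_gt ((d:ℤ)+1) p with hout | hin
  · rw [hz.2 p (by rw [abs_of_pos (by omega)]; omega),
      hy.2 p (by rw [abs_of_pos (by omega)]; omega)]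
  -- p ∈ [-d, d]
  have hpIcd : p ∈ Icd := by
    simp only [hIcd, Finset.mem_Icc]; omega
  set j := blk nu n p with hj
  set i := blk lam n (z p) with hi
  set S : Finset ℤ := (Icd.filter (fun r => blk nu n r = j)).filter
      (fun q => blk lam n (z q) = i) with hS
  have hpS : p ∈ S := Finset.mem_filter.mpr
    ⟨Finset.mem_filter.mpr ⟨hpIcd, rfl⟩, rfl⟩
  have hSsub : ∀ q ∈ S, q ∈ Icd ∧ blk nu n q = j ∧ blk lam n (z q) = i := by
    intro q hq
    simp only [hS, Finset.mem_filter] at hq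
    exact ⟨hq.1.1, hq.1.2, hq.2⟩
  have hSmono : ∀ (g : Equiv.Perm ℤ), g ∈ W d → redR d n nu g →
      ∀ u ∈ S, ∀ w ∈ S, u < w → g u < g w := by
    intro g hgW hgR u hu w hw huw
    obtain ⟨huI, huj, _⟩ := hSsub u hu
    obtain ⟨hwI, hwj, _⟩ := hSsub w hw
    simp only [hIcd, Finset.mem_Icc] at huI hwI
    exact red_mono hnu hgW hgR u w huI.1 hwI.2 huw (by rw [huj, hwj])
  -- image description
  have him : ∀ (g : Equiv.Perm ℤ), g ∈ W d →
      (∀ q ∈ S, blk lam n (g q) = i) →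
      (∀ q, q ∈ Icd → blk nu n q = j → blk lam n (g q) = i → q ∈ S) →
      S.image (fun r => g r)
        = (Icd.filter (fun m => blk lam n m = i)).filter
            (fun m => blk nu n (g⁻¹ m) = j) := by
    intro g hgW hgprof hgback
    ext m
    simp only [Finset.mem_image, Finset.mem_filter]
    constructor
    · rintro ⟨q, hq, rfl⟩
      obtain ⟨hqI, hqj, _⟩ := hSsub q hq
      simp only [hIcd, Finset.mem_Icc] at hqI
      obtain ⟨hc1, hc2⟩ := W_bound' hgW hqI.1 hqI.2
      refine ⟨⟨?_, hgprof q hq⟩, ?_⟩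
      · simp only [hIcd, Finset.mem_Icc]; exact ⟨hc1, hc2⟩
      · rw [Equiv.Perm.inv_apply_self]; exact hqj
    · rintro ⟨⟨hmI, hmi⟩, hmj⟩
      refine ⟨g⁻¹ m, ?_, Equiv.Perm.apply_inv_self g m⟩
      apply hgback
      · simp only [hIcd, Finset.mem_Icc] at hmI ⊢
        exact ⟨(W_bound' (W_inv hgW) hmI.1 hmI.2).1,
          (W_bound' (W_inv hgW) hmI.1 hmI.2).2⟩
      · exact hmj
      · rw [Equiv.Perm.apply_inv_self]; exact hmi
  have himz : S.image (fun r => z r)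
      = (Icd.filter (fun m => blk lam n m = i)).filter
          (fun m => blk nu n (z⁻¹ m) = j) := by
    apply him z hz
    · intro q hq; exact (hSsub q hq).2.2
    · intro q hqI hqj hqi
      simp only [hS, Finset.mem_filter]
      exact ⟨⟨hqI, hqj⟩, hqi⟩
  have himy : S.image (fun r => y r)
      = (Icd.filter (fun m => blk lam n m = i)).filter
          (fun m => blk nu n (y⁻¹ m) = j) := by
    apply him y hy
    · intro q hq
      obtain ⟨hqI, _, hqi⟩ := hSsub q hq
      rw [← F5 q hqI]; exact hqi
    · intro q hqI hqj hqi
      simp only [hS, Finset.mem_filter]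
      refine ⟨⟨hqI, hqj⟩, ?_⟩
      rw [F5 q hqI]; exact hqi
  have himeq : S.image (fun r => z r) = S.image (fun r => y r) := by
    rw [himz, himy]
    apply Finset.filter_congr
    intro m hm
    simp only [Finset.mem_filter] at hm
    rw [F6 m hm.1]
  have := strict_image_eq S.card S (fun r => z r) (fun r => y r) rfl
    (hSmono z hz hzR) (hSmono y hy hyR) himeq p hpS
  exact this
/-! ### Finiteness of `W d` -/

lemma W_finite (d : ℕ) : (W d).Finite := by
  rw [← Set.finite_coe_iff]
  have hF : ∀ g : W d, ∀ x : {x : ℤ // x ∈ Finset.Icc (-(d:ℤ)) (d:ℤ)},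
      (g : Equiv.Perm ℤ) x.1 ∈ Finset.Icc (-(d:ℤ)) (d:ℤ) := by
    rintro ⟨g, hg⟩ ⟨x, hx⟩
    simp only [Finset.mem_Icc] at hx ⊢
    exact W_bound' hg hx.1 hx.2
  let F : W d → ({x : ℤ // x ∈ Finset.Icc (-(d:ℤ)) (d:ℤ)} →
      {x : ℤ // x ∈ Finset.Icc (-(d:ℤ)) (d:ℤ)}) :=
    fun g x => ⟨(g : Equiv.Perm ℤ) x.1, hF g x⟩
  have hinj : Function.Injective F := by
    rintro ⟨g, hg⟩ ⟨g', hg'⟩ he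
    apply Subtype.ext
    ext r
    rcases le_or_gt r (-(d:ℤ)-1) with h1 | h1
    · rw [hg.2 r (by rw [abs_of_nonpos (by omega)]; omega),
        hg'.2 r (by rw [abs_of_nonpos (by omega)]; omega)]
    rcases le_or_gt ((d:ℤ)+1) r with h2 | h2
    · rw [hg.2 r (by rw [abs_of_pos (by omega)]; omega),
        hg'.2 r (by rw [abs_of_pos (by omega)]; omega)]
    · have hr : r ∈ Finset.Icc (-(d:ℤ)) (d:ℤ) := by
        simp only [Finset.mem_Icc]; omega
      have := congrFun he ⟨r, hr⟩
      simpa [F, Subtype.ext_iff] using this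
  exact Finite.of_injective F hinj

lemma Wpar_finite (d n : ℕ) (lam : ℕ → ℕ) :
    ((Wpar d n lam : Subgroup (Equiv.Perm ℤ)) : Set (Equiv.Perm ℤ)).Finite :=
  Set.Finite.subset (W_finite d) (fun _ hx => Wpar_mem_W hx)

/-! ### Laurent monomials -/

lemma UV_mul (a b a' b' : ℤ) : UV a b * UV a' b' = UV (a+a') (b+b') := by
  unfold UV
  rw [AddMonoidAlgebra.single_mul_single]
  norm_num

lemma UV_one : UV 0 0 = 1 := by
  unfold UV
  rw [AddMonoidAlgebra.one_def]
  rfl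

lemma Uq_sq : Uq ^ 2 = UV 2 0 := by
  rw [sq]; unfold Uq; rw [UV_mul]; norm_num

lemma Vq_sq : Vq ^ 2 = UV 0 2 := by
  rw [sq]; unfold Vq; rw [UV_mul]; norm_num
/-! ### The key algebraic lemma: `x_λ T_s = q_s² x_λ` -/

section Algebraic

variable {d n : ℕ} {lam : ℕ → ℕ} {H : Type*} [Ring H] [Algebra LA H]
  (T : Equiv.Perm ℤ → H)

lemma xpar_mul_Ts
    (hmul : ∀ w w' : Equiv.Perm ℤ, w ∈ W d → w' ∈ W d →
      len d (w * w') = len d w + len d w' → T w * T w' = T (w * w'))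
    {i : ℕ} (hi : alw d n lam i) (Q : LA)
    (hrel : T (s i) * T (s i)
      = algebraMap LA H Q * T (s i) - T (s i) + algebraMap LA H Q) :
    (∑ x ∈ (Wpar_finite d n lam).toFinset, T x) * T (s i)
      = algebraMap LA H Q * ∑ x ∈ (Wpar_finite d n lam).toFinset, T x := by
  classical
  have hmemF : ∀ w, w ∈ (Wpar_finite d n lam).toFinset ↔ w ∈ Wpar d n lam :=
    fun w => (Wpar_finite d n lam).mem_toFinset
  have hsiW : s i ∈ W d := s_mem_W hi.1
  have hsipar : s i ∈ Wpar d n lam := Subgroup.subset_closure ⟨i, hi.1, hi.2, rfl⟩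
  have hlen_s : len d (s i) = 1 := len_s hi.1
  set F := (Wpar_finite d n lam).toFinset with hFdef
  set D := F.filter (fun w => len d (w * s i) = len d w + 1) with hD
  have hDF : D ⊆ F := Finset.filter_subset _ _
  have hWF : ∀ w ∈ F, w ∈ W d := fun w hw => Wpar_mem_W ((hmemF w).mp hw)
  have hws_invol : ∀ w : Equiv.Perm ℤ, (w * s i) * s i = w := by
    intro w
    rw [mul_assoc, s_mul_self, mul_one]
  have hdich : ∀ w ∈ F, len d (w * s i) = len d w + 1 ∨
      len d (w * s i) + 1 = len d w := by
    intro w hw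
    have hwW := hWF w hw
    by_cases hinv : w (alpha i).2 < w (alpha i).1
    · right
      rw [len_eq_L (W_mul hwW hsiW), len_eq_L hwW]
      exact (L_mul_s hi.1 hwW).1 hinv
    · left
      rw [len_eq_L (W_mul hwW hsiW), len_eq_L hwW]
      exact (L_mul_s hi.1 hwW).2 hinv
  have hUnion : F = D ∪ D.image (fun w => w * s i) := by
    apply Finset.Subset.antisymm
    · intro w hw
      rcases hdich w hw with h1 | h1
      · exact Finset.mem_union_left _ (Finset.mem_filter.mpr ⟨hw, h1⟩)
      · apply Finset.mem_union_right
        rw [Finset.mem_image]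
        refine ⟨w * s i, ?_, hws_invol w⟩
        have hwsF : w * s i ∈ F := by
          rw [hmemF]
          exact mul_mem ((hmemF w).mp hw) hsipar
        apply Finset.mem_filter.mpr ⟨hwsF, ?_⟩
        rw [hws_invol w]
        omega
    · intro w hw
      rcases Finset.mem_union.mp hw with h1 | h1
      · exact hDF h1
      · obtain ⟨w', hw', rfl⟩ := Finset.mem_image.mp h1
        rw [hmemF]
        exact mul_mem ((hmemF w').mp (hDF hw')) hsipar
  have hdisj : Disjoint D (D.image (fun w => w * s i)) := by
    rw [Finset.disjoint_left]
    intro w hwD hwI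
    obtain ⟨w', hw'D, rfl⟩ := Finset.mem_image.mp hwI
    have h1 := (Finset.mem_filter.mp hwD).2
    have h2 := (Finset.mem_filter.mp hw'D).2
    rw [hws_invol w'] at h1
    omega
  have hinj : ∀ x ∈ D, ∀ y ∈ D, x * s i = y * s i → x = y := by
    intro x _ y _ h
    have := congrArg (fun u => u * s i) h
    simpa only [hws_invol] using this
  have hTws : ∀ w ∈ D, T w * T (s i) = T (w * s i) := by
    intro w hw
    exact hmul w (s i) (hWF w (hDF hw)) hsiW
      (by rw [hlen_s]; exact (Finset.mem_filter.mp hw).2)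
  have hTws2 : ∀ w ∈ D, T (w * s i) * T (s i)
      = algebraMap LA H Q * T (w * s i) - T (w * s i)
        + algebraMap LA H Q * T w := by
    intro w hw
    rw [← hTws w hw, mul_assoc, hrel, mul_add, mul_sub,
      ← mul_assoc (T w) (algebraMap LA H Q) (T (s i)),
      ← Algebra.commutes Q (T w),
      mul_assoc (algebraMap LA H Q) (T w) (T (s i))]
  rw [hUnion, Finset.sum_union hdisj, Finset.sum_image hinj]
  rw [add_mul, Finset.sum_mul, Finset.sum_mul]
  rw [Finset.sum_congr rfl hTws, Finset.sum_congr rfl hTws2]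
  rw [mul_add, Finset.mul_sum, Finset.mul_sum]
  rw [← Finset.sum_add_distrib, ← Finset.sum_add_distrib]
  apply Finset.sum_congr rfl
  intro w _
  abel

lemma Ts_mul_xpar
    (hmul : ∀ w w' : Equiv.Perm ℤ, w ∈ W d → w' ∈ W d →
      len d (w * w') = len d w + len d w' → T w * T w' = T (w * w'))
    {i : ℕ} (hi : alw d n lam i) (Q : LA)
    (hrel : T (s i) * T (s i)
      = algebraMap LA H Q * T (s i) - T (s i) + algebraMap LA H Q) :
    T (s i) * (∑ x ∈ (Wpar_finite d n lam).toFinset, T x)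
      = algebraMap LA H Q * ∑ x ∈ (Wpar_finite d n lam).toFinset, T x := by
  classical
  have hmemF : ∀ w, w ∈ (Wpar_finite d n lam).toFinset ↔ w ∈ Wpar d n lam :=
    fun w => (Wpar_finite d n lam).mem_toFinset
  have hsiW : s i ∈ W d := s_mem_W hi.1
  have hsipar : s i ∈ Wpar d n lam := Subgroup.subset_closure ⟨i, hi.1, hi.2, rfl⟩
  have hlen_s : len d (s i) = 1 := len_s hi.1
  set F := (Wpar_finite d n lam).toFinset with hFdef
  set D := F.filter (fun w => len d (s i * w) = len d w + 1) with hD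
  have hDF : D ⊆ F := Finset.filter_subset _ _
  have hWF : ∀ w ∈ F, w ∈ W d := fun w hw => Wpar_mem_W ((hmemF w).mp hw)
  have hws_invol : ∀ w : Equiv.Perm ℤ, s i * (s i * w) = w := by
    intro w
    rw [← mul_assoc, s_mul_self, one_mul]
  have hdich : ∀ w ∈ F, len d (s i * w) = len d w + 1 ∨
      len d (s i * w) + 1 = len d w := by
    intro w hw
    have hwW := hWF w hw
    by_cases hinv : w⁻¹ (alpha i).2 < w⁻¹ (alpha i).1
    · right; exact len_s_mul_lt hi.1 hwW hinv
    · left; exact len_s_mul_gt hi.1 hwW hinv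
  have hUnion : F = D ∪ D.image (fun w => s i * w) := by
    apply Finset.Subset.antisymm
    · intro w hw
      rcases hdich w hw with h1 | h1
      · exact Finset.mem_union_left _ (Finset.mem_filter.mpr ⟨hw, h1⟩)
      · apply Finset.mem_union_right
        rw [Finset.mem_image]
        refine ⟨s i * w, ?_, hws_invol w⟩
        have hwsF : s i * w ∈ F := by
          rw [hmemF]
          exact mul_mem hsipar ((hmemF w).mp hw)
        apply Finset.mem_filter.mpr ⟨hwsF, ?_⟩
        rw [hws_invol w]
        omega
    · intro w hw
      rcases Finset.mem_union.mp hw with h1 | h1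
      · exact hDF h1
      · obtain ⟨w', hw', rfl⟩ := Finset.mem_image.mp h1
        rw [hmemF]
        exact mul_mem hsipar ((hmemF w').mp (hDF hw'))
  have hdisj : Disjoint D (D.image (fun w => s i * w)) := by
    rw [Finset.disjoint_left]
    intro w hwD hwI
    obtain ⟨w', hw'D, rfl⟩ := Finset.mem_image.mp hwI
    have h1 := (Finset.mem_filter.mp hwD).2
    have h2 := (Finset.mem_filter.mp hw'D).2
    rw [hws_invol w'] at h1
    omega
  have hinj : ∀ x ∈ D, ∀ y ∈ D, s i * x = s i * y → x = y := by
    intro x _ y _ h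
    have := congrArg (fun u => s i * u) h
    simpa only [hws_invol] using this
  have hTws : ∀ w ∈ D, T (s i) * T w = T (s i * w) := by
    intro w hw
    exact hmul (s i) w hsiW (hWF w (hDF hw))
      (by rw [hlen_s]; have := (Finset.mem_filter.mp hw).2; omega)
  have hTws2 : ∀ w ∈ D, T (s i) * T (s i * w)
      = algebraMap LA H Q * T (s i * w) - T (s i * w)
        + algebraMap LA H Q * T w := by
    intro w hw
    rw [← hTws w hw, ← mul_assoc, hrel, add_mul, sub_mul, mul_assoc]
  rw [hUnion, Finset.sum_union hdisj, Finset.sum_image hinj]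
  rw [mul_add, Finset.mul_sum, Finset.mul_sum]
  rw [Finset.sum_congr rfl hTws, Finset.sum_congr rfl hTws2]
  rw [mul_add, Finset.mul_sum, Finset.mul_sum]
  rw [← Finset.sum_add_distrib, ← Finset.sum_add_distrib]
  apply Finset.sum_congr rfl
  intro w _
  abel

end Algebraic
/-- STATEMENT 11, preliminary form with `Finset` sums. -/
theorem stmt11_aux (d n : ℕ) (hd : 1 ≤ d) (hn : 1 ≤ n)
    {H : Type*} [Ring H] [Algebra LA H]
    (T : Equiv.Perm ℤ → H)
    (hmul : ∀ w w' : Equiv.Perm ℤ, w ∈ W d → w' ∈ W d →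
      len d (w * w') = len d w + len d w' → T w * T w' = T (w * w'))
    (hq0 : (T (s 0) + 1) * (T (s 0) - algebraMap LA H (Uq ^ 2)) = 0)
    (hqi : ∀ i, 1 ≤ i → i < d →
      (T (s i) + 1) * (T (s i) - algebraMap LA H (Vq ^ 2)) = 0)
    (lam nu : ℕ → ℕ) (hlam : lam ∈ LambdaSet n d) (hnu : nu ∈ LambdaSet n d)
    (z : Equiv.Perm ℤ) (hz : z ∈ W d)
    (y : Equiv.Perm ℤ) (hy : y ∈ DDset d n lam nu)
    (hzy : ∃ a ∈ Wpar d n lam, ∃ c ∈ Wpar d n nu, z = a * y * c) :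
    (∑ x ∈ (Wpar_finite d n lam).toFinset, T x) * T z *
        (∑ x ∈ (Wpar_finite d n nu).toFinset, T x) =
      algebraMap LA H
          (UV (2 * ((lenc d z : ℤ) - (lenc d y : ℤ)))
              (2 * (((len d z : ℤ) - (lenc d z : ℤ)) - ((len d y : ℤ) - (lenc d y : ℤ))))) *
        ((∑ x ∈ (Wpar_finite d n lam).toFinset, T x) * T y *
          (∑ x ∈ (Wpar_finite d n nu).toFinset, T x)) := by
  classical
  obtain ⟨hyD, hyD'⟩ := hy
  obtain ⟨hyW, hyadd⟩ := hyD
  obtain ⟨hyWinv, hyadd'⟩ := hyD'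
  -- quadratic relations in the convenient form
  have hqrel : ∀ i : ℕ, i < d → ∃ Q : LA,
      ((i = 0 → Q = UV 2 0) ∧ (1 ≤ i → Q = UV 0 2)) ∧
      T (s i) * T (s i)
        = algebraMap LA H Q * T (s i) - T (s i) + algebraMap LA H Q := by
    intro i hid
    have main : ∀ Q : LA,
        (T (s i) + 1) * (T (s i) - algebraMap LA H Q) = 0 →
        T (s i) * T (s i)
          = algebraMap LA H Q * T (s i) - T (s i) + algebraMap LA H Q := by
      intro Q hQ
      have hc : T (s i) * algebraMap LA H Q = algebraMap LA H Q * T (s i) :=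
        (Algebra.commutes _ _).symm
      have hsub : T (s i) * T (s i)
          - (algebraMap LA H Q * T (s i) - T (s i) + algebraMap LA H Q)
          = (T (s i) + 1) * (T (s i) - algebraMap LA H Q) := by
        rw [← hc]
        noncomm_ring
      rw [hQ] at hsub
      have := sub_eq_zero.mp hsub
      exact this
    rcases Nat.eq_zero_or_pos i with h0 | h0
    · subst h0
      refine ⟨UV 2 0, ⟨fun _ => rfl, fun h => by omega⟩, ?_⟩
      apply main
      rw [← Uq_sq]
      exact hq0
    · refine ⟨UV 0 2, ⟨fun h => by omega, fun _ => rfl⟩, ?_⟩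
      apply main
      rw [← Vq_sq]
      exact hqi i h0 hid
  -- notation
  set XL := ∑ x ∈ (Wpar_finite d n lam).toFinset, T x with hXL
  set XN := ∑ x ∈ (Wpar_finite d n nu).toFinset, T x with hXN
  -- main induction
  have key : ∀ m : ℕ, ∀ z : Equiv.Perm ℤ, z ∈ W d →
      (∃ a ∈ Wpar d n lam, ∃ c ∈ Wpar d n nu, z = a * y * c) → len d z = m →
      XL * T z * XN =
        algebraMap LA H
          (UV (2 * ((lenc d z : ℤ) - (lenc d y : ℤ)))
            (2 * (((len d z : ℤ) - (lenc d z : ℤ))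
              - ((len d y : ℤ) - (lenc d y : ℤ))))) * (XL * T y * XN) := by
    intro m
    induction m using Nat.strong_induction_on with
    | _ m IH =>
      intro z hzW hrep hlenz
      obtain ⟨a, ha, c, hc, hzac⟩ := hrep
      by_cases Hl : ∃ i : ℕ, alw d n lam i ∧ len d (s i * z) + 1 = len d z
      · -- a left descent
        obtain ⟨i, hiA, hdesc⟩ := Hl
        have hsiW : s i ∈ W d := s_mem_W hiA.1
        set z' := s i * z with hz'
        have hz'W : z' ∈ W d := W_mul hsiW hzW
        have hzz' : z = s i * z' := by
          rw [hz', ← mul_assoc, s_mul_self, one_mul]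
        have hlenz' : len d (s i * z') = len d (s i) + len d z' := by
          rw [← hzz', len_s hiA.1]
          omega
        have hTz : T z = T (s i) * T z' := by
          rw [hmul (s i) z' hsiW hz'W hlenz', ← hzz']
        have hrep' : ∃ a' ∈ Wpar d n lam, ∃ c' ∈ Wpar d n nu,
            z' = a' * y * c' := by
          refine ⟨s i * a, mul_mem (Subgroup.subset_closure
            ⟨i, hiA.1, hiA.2, rfl⟩) ha, c, hc, ?_⟩
          rw [hz', hzac]
          group
        obtain ⟨Q, hQval, hQrel⟩ := hqrel i hiA.1
        have hIH := IH (len d z') (by omega) z' hz'W hrep' rfl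
        -- exponent bookkeeping
        have hexp : UV (2 * ((lenc d z : ℤ) - (lenc d y : ℤ)))
              (2 * (((len d z : ℤ) - (lenc d z : ℤ))
                - ((len d y : ℤ) - (lenc d y : ℤ))))
            = Q * UV (2 * ((lenc d z' : ℤ) - (lenc d y : ℤ)))
              (2 * (((len d z' : ℤ) - (lenc d z' : ℤ))
                - ((len d y : ℤ) - (lenc d y : ℤ)))) := by
          rcases Nat.eq_zero_or_pos i with h0 | h0
          · subst h0
            rw [hQval.1 rfl, UV_mul]
            -- z⁻¹ 1 < 0
            have hinv : z⁻¹ (alpha 0).2 < z⁻¹ (alpha 0).1 := by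
              by_contra hninv
              have hgt := len_s_mul_gt hiA.1 hzW hninv
              rw [← hz'] at hgt
              omega
            unfold alpha at hinv
            simp only [if_true, reduceIte] at hinv
            have hzinv1 : z⁻¹ 1 < 0 := by
              have := (W_inv hzW).1 1
              omega
            have hlenc := lenc_s0_mul_left hd hzW hzinv1
            rw [← hz'] at hlenc
            congr 1 <;> push_cast <;> omega
          · rw [hQval.2 h0, UV_mul]
            have hlenc : lenc d (s i * z) = lenc d z := lenc_s_mul_left h0
            rw [← hz'] at hlenc
            congr 1 <;> push_cast <;> omega
        calc XL * T z * XN = (XL * T (s i)) * (T z' * XN) := by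
              rw [hTz]; noncomm_ring
        _ = (algebraMap LA H Q * XL) * (T z' * XN) := by
              rw [hXL, xpar_mul_Ts T hmul hiA Q hQrel]
        _ = algebraMap LA H Q * (XL * T z' * XN) := by noncomm_ring
        _ = algebraMap LA H Q * (algebraMap LA H
              (UV (2 * ((lenc d z' : ℤ) - (lenc d y : ℤ)))
                (2 * (((len d z' : ℤ) - (lenc d z' : ℤ))
                  - ((len d y : ℤ) - (lenc d y : ℤ))))) * (XL * T y * XN)) := by
              rw [hIH]
        _ = algebraMap LA H
              (UV (2 * ((lenc d z : ℤ) - (lenc d y : ℤ)))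
                (2 * (((len d z : ℤ) - (lenc d z : ℤ))
                  - ((len d y : ℤ) - (lenc d y : ℤ))))) * (XL * T y * XN) := by
              rw [hexp, map_mul]
              exact (mul_assoc _ _ _).symm
      by_cases Hr : ∃ j : ℕ, alw d n nu j ∧ len d (z * s j) + 1 = len d z
      · -- a right descent
        obtain ⟨j, hjA, hdesc⟩ := Hr
        have hsjW : s j ∈ W d := s_mem_W hjA.1
        set z' := z * s j with hz'
        have hz'W : z' ∈ W d := W_mul hzW hsjW
        have hzz' : z = z' * s j := by
          rw [hz', mul_assoc, s_mul_self, mul_one]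
        have hlenz' : len d (z' * s j) = len d z' + len d (s j) := by
          rw [← hzz', len_s hjA.1]
          omega
        have hTz : T z = T z' * T (s j) := by
          rw [hmul z' (s j) hz'W hsjW hlenz', ← hzz']
        have hrep' : ∃ a' ∈ Wpar d n lam, ∃ c' ∈ Wpar d n nu,
            z' = a' * y * c' := by
          refine ⟨a, ha, c * s j, mul_mem hc (Subgroup.subset_closure
            ⟨j, hjA.1, hjA.2, rfl⟩), ?_⟩
          rw [hz', hzac]
          group
        obtain ⟨Q, hQval, hQrel⟩ := hqrel j hjA.1
        have hIH := IH (len d z') (by omega) z' hz'W hrep' rfl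
        have hexp : UV (2 * ((lenc d z : ℤ) - (lenc d y : ℤ)))
              (2 * (((len d z : ℤ) - (lenc d z : ℤ))
                - ((len d y : ℤ) - (lenc d y : ℤ))))
            = Q * UV (2 * ((lenc d z' : ℤ) - (lenc d y : ℤ)))
              (2 * (((len d z' : ℤ) - (lenc d z' : ℤ))
                - ((len d y : ℤ) - (lenc d y : ℤ)))) := by
          rcases Nat.eq_zero_or_pos j with h0 | h0
          · subst h0
            rw [hQval.1 rfl, UV_mul]
            have hinv : z (alpha 0).2 < z (alpha 0).1 := by
              by_contra hninv
              have hgt := len_mul_s_gt hjA.1 hzW hninv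
              rw [← hz'] at hgt
              omega
            unfold alpha at hinv
            simp only [if_true, reduceIte] at hinv
            have hz1 : z 1 < 0 := by
              have := hzW.1 1
              omega
            have hlenc := lenc_mul_s0_right hd hzW hz1
            rw [← hz'] at hlenc
            congr 1 <;> push_cast <;> omega
          · rw [hQval.2 h0, UV_mul]
            have hlenc : lenc d (z * s j) = lenc d z :=
              lenc_mul_s_right h0 hjA.1
            rw [← hz'] at hlenc
            congr 1 <;> push_cast <;> omega
        calc XL * T z * XN = (XL * T z') * (T (s j) * XN) := by
              rw [hTz]; noncomm_ring
        _ = (XL * T z') * (algebraMap LA H Q * XN) := by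
              rw [hXN, Ts_mul_xpar T hmul hjA Q hQrel]
        _ = algebraMap LA H Q * (XL * T z' * XN) := by
              rw [← mul_assoc, ← Algebra.commutes Q (XL * T z'), mul_assoc]
        _ = algebraMap LA H Q * (algebraMap LA H
              (UV (2 * ((lenc d z' : ℤ) - (lenc d y : ℤ)))
                (2 * (((len d z' : ℤ) - (lenc d z' : ℤ))
                  - ((len d y : ℤ) - (lenc d y : ℤ))))) * (XL * T y * XN)) := by
              rw [hIH]
        _ = algebraMap LA H
              (UV (2 * ((lenc d z : ℤ) - (lenc d y : ℤ)))
                (2 * (((len d z : ℤ) - (lenc d z : ℤ))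
                  - ((len d y : ℤ) - (lenc d y : ℤ))))) * (XL * T y * XN) := by
              rw [hexp, map_mul]
              exact (mul_assoc _ _ _).symm
      · -- no descent : z = y
        push_neg at Hl Hr
        have hinv_ne : ∀ (g : Equiv.Perm ℤ) (u v : ℤ), u ≠ v → g u ≠ g v :=
          fun g u v huv he => huv (g.injective he)
        have hredR : ∀ (mu : ℕ → ℕ) (g : Equiv.Perm ℤ), g ∈ W d →
            (∀ j : ℕ, alw d n mu j → ¬ g (alpha j).2 < g (alpha j).1) →
            redR d n mu g := by
          intro mu g hgW hnd
          constructor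
          · intro j hj1 hjA
            have := hnd j hjA
            unfold alpha at this
            rw [if_neg (by omega)] at this
            have hne : g (j:ℤ) ≠ g ((j:ℤ)+1) := hinv_ne g _ _ (by omega)
            simp only at this
            omega
          · intro h0A
            have := hnd 0 h0A
            unfold alpha at this
            simp only [if_true, reduceIte] at this
            have he : g (-1) = -(g 1) := hgW.1 1
            have hne : g 1 ≠ 0 := by
              intro hh
              have : g 1 = g 0 := by rw [hh, W_zero hgW]
              have := g.injective this
              omega
            omega
        have hzR : redR d n nu z := by
          apply hredR nu z hzW
          intro j hjA hinv
          have := len_mul_s_lt hjA.1 hzW hinv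
          exact Hr j hjA this
        have hzL : redR d n lam z⁻¹ := by
          apply hredR lam z⁻¹ (W_inv hzW)
          intro i hiA hinv
          have := len_s_mul_lt hiA.1 hzW hinv
          exact Hl i hiA this
        have hyR : redR d n nu y := by
          apply hredR nu y hyW
          intro j hjA hinv
          have h1 := len_mul_s_lt hjA.1 hyW hinv
          have h2 : len d (s j * y⁻¹) = len d (s j) + len d y⁻¹ :=
            hyadd' (s j) (Subgroup.subset_closure ⟨j, hjA.1, hjA.2, rfl⟩)
          have h3 : len d (y * s j) = len d (s j * y⁻¹) := by
            have he : (y * s j)⁻¹ = s j * y⁻¹ := by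
              rw [mul_inv_rev, s_inv]
            rw [← he, len_inv (W_mul hyW (s_mem_W hjA.1))]
          rw [len_s hjA.1, len_inv hyW] at h2
          omega
        have hyL : redR d n lam y⁻¹ := by
          apply hredR lam y⁻¹ (W_inv hyW)
          intro i hiA hinv
          have h1 := len_s_mul_lt hiA.1 hyW hinv
          have h2 : len d (s i * y) = len d (s i) + len d y :=
            hyadd (s i) (Subgroup.subset_closure ⟨i, hiA.1, hiA.2, rfl⟩)
          rw [len_s hiA.1] at h2
          omega
        have hzy : z = y :=
          recon hlam.1 hnu.1 hzW hyW ha hc hzac hzR hzL hyR hyL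
        subst hzy
        rw [show (2 * ((lenc d z : ℤ) - (lenc d z : ℤ))) = 0 by ring,
          show (2 * (((len d z : ℤ) - (lenc d z : ℤ))
            - ((len d z : ℤ) - (lenc d z : ℤ)))) = 0 by ring,
          UV_one, map_one, one_mul]
  obtain ⟨a, ha, c, hc, hzac⟩ := hzy
  exact key (len d z) z hz ⟨a, ha, c, hc, hzac⟩ rfl
/-- in the Hecke algebra `H` of type B_d with unequal parameters, for
`λ, ν ∈ Λ_{n,d}`, `z ∈ W_d`, and `y` the minimal length representative of the double
coset `W_λ z W_ν` (i.e. `y ∈ D_{λν}` and `z ∈ W_λ y W_ν`), one has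
`x_λ T_z x_ν = u^{2(ℓ_c(z) - ℓ_c(y))} v^{2(ℓ_a(z) - ℓ_a(y))} x_λ T_y x_ν`. -/
theorem stmt11 (d n : ℕ) (hd : 1 ≤ d) (hn : 1 ≤ n)
    {H : Type*} [Ring H] [Algebra LA H]
    (T : Equiv.Perm ℤ → H)
    (b : Module.Basis (W d) LA H) (hb : ∀ g : W d, b g = T (g : Equiv.Perm ℤ))
    (hone : T 1 = 1)
    (hmul : ∀ w w' : Equiv.Perm ℤ, w ∈ W d → w' ∈ W d →
      len d (w * w') = len d w + len d w' → T w * T w' = T (w * w'))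
    (hq0 : (T (s 0) + 1) * (T (s 0) - algebraMap LA H (Uq ^ 2)) = 0)
    (hqi : ∀ i, 1 ≤ i → i < d →
      (T (s i) + 1) * (T (s i) - algebraMap LA H (Vq ^ 2)) = 0)
    (lam nu : ℕ → ℕ) (hlam : lam ∈ LambdaSet n d) (hnu : nu ∈ LambdaSet n d)
    (z : Equiv.Perm ℤ) (hz : z ∈ W d)
    (y : Equiv.Perm ℤ) (hy : y ∈ DDset d n lam nu)
    (hzy : ∃ a ∈ Wpar d n lam, ∃ c ∈ Wpar d n nu, z = a * y * c) :
    (∑ᶠ x ∈ (Wpar d n lam : Set (Equiv.Perm ℤ)), T x) * T z *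
        (∑ᶠ x ∈ (Wpar d n nu : Set (Equiv.Perm ℤ)), T x) =
      algebraMap LA H
          (UV (2 * ((lenc d z : ℤ) - (lenc d y : ℤ)))
              (2 * (((len d z : ℤ) - (lenc d z : ℤ)) - ((len d y : ℤ) - (lenc d y : ℤ))))) *
        ((∑ᶠ x ∈ (Wpar d n lam : Set (Equiv.Perm ℤ)), T x) * T y *
          (∑ᶠ x ∈ (Wpar d n nu : Set (Equiv.Perm ℤ)), T x)) := by
  have hXL : (∑ᶠ x ∈ (Wpar d n lam : Set (Equiv.Perm ℤ)), T x)
      = ∑ x ∈ (Wpar_finite d n lam).toFinset, T x := by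
    exact finsum_mem_eq_finite_toFinset_sum T (Wpar_finite d n lam)
  have hXN : (∑ᶠ x ∈ (Wpar d n nu : Set (Equiv.Perm ℤ)), T x)
      = ∑ x ∈ (Wpar_finite d n nu).toFinset, T x := by
    exact finsum_mem_eq_finite_toFinset_sum T (Wpar_finite d n nu)
  rw [hXL, hXN]
  exact stmt11_aux d n hd hn T hmul hq0 hqi lam nu hlam hnu z hz y hy hzy

end TypeB
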